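/- arXiv:2310.02860 — 12 statements merged into one kernel-verified Lean document; each statement's English description precedes it below -/
import Mathlib

section
/- Let f ∈ ℤ[x] be a monic polynomial with f(0) ≠ 0, let p be a prime and n a positive integer such that f(x) = g(x)^n + p·h(x) for some g, h ∈ ℤ[x], the reduction of g modulo p is irreducible over 𝔽_p, and the reduction of g modulo p does not divide the reduction of h modulo p in 𝔽_p[x]. Then f is irreducible over ℚ. -/
open Polynomial

private lemma map_zmod_eq_zero_iff {p : ℕ} (hp : p.Prime) (q : Polynomial ℤ) :
    q.map (Int.castRingHom (ZMod p)) = 0 ↔ C (p : ℤ) ∣ q := by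
  rw [C_dvd_iff_dvd_coeff, Polynomial.ext_iff]
  simp [ZMod.intCast_zmod_eq_zero_iff_dvd]

private lemma schonemann_core (f g h : Polynomial ℤ)
    (p : ℕ) (hp : p.Prime) (n : ℕ) (hn : 0 < n)
    (hfgh : f = g ^ n + C (p : ℤ) * h)
    (hirr : Irreducible (g.map (Int.castRingHom (ZMod p))))
    (hndvd : ¬ (g.map (Int.castRingHom (ZMod p)) ∣ h.map (Int.castRingHom (ZMod p))))
    (a b : Polynomial ℤ) (ha : a.Monic) (hb : b.Monic)
    (hua : ¬ IsUnit a) (hub : ¬ IsUnit b) (hab : f = a * b) : False := by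
  haveI : Fact p.Prime := ⟨hp⟩
  set φ := Int.castRingHom (ZMod p) with hφ
  have hsurj : Function.Surjective φ := ZMod.intCast_surjective
  have hmapf : f.map φ = (g.map φ) ^ n := by
    rw [hfgh]
    simp [Polynomial.map_add, Polynomial.map_pow, Polynomial.map_mul, Polynomial.map_C]
  have hgp : Prime (g.map φ) := hirr.prime
  -- map a, map b are monic nonunits
  have hda : 0 < a.natDegree := by
    rcases Nat.eq_zero_or_pos a.natDegree with h1 | h1
    · exact absurd (ha.natDegree_eq_zero.mp h1 ▸ isUnit_one) hua
    · exact h1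
  have hdb : 0 < b.natDegree := by
    rcases Nat.eq_zero_or_pos b.natDegree with h1 | h1
    · exact absurd (hb.natDegree_eq_zero.mp h1 ▸ isUnit_one) hub
    · exact h1
  have hprod : (a.map φ) * (b.map φ) = (g.map φ) ^ n := by
    rw [← Polynomial.map_mul, ← hab, hmapf]
  have hdvd_pow : ∀ q : Polynomial ℤ, q.Monic → 0 < q.natDegree →
      (q.map φ) ∣ (g.map φ) ^ n → (g.map φ) ∣ (q.map φ) := by
    intro q hq hdq hqd
    obtain ⟨i, hi, hassoc⟩ := (dvd_prime_pow hgp n).mp hqd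
    rcases Nat.eq_zero_or_pos i with rfl | hi0
    · exfalso
      rw [pow_zero] at hassoc
      have : IsUnit (q.map φ) := hassoc.symm.isUnit isUnit_one
      exact not_isUnit_of_natDegree_pos _ (by rwa [hq.natDegree_map]) this
    · exact dvd_trans (dvd_pow_self _ hi0.ne') hassoc.symm.dvd
  have hga : (g.map φ) ∣ (a.map φ) :=
    hdvd_pow a ha hda ⟨b.map φ, hprod.symm⟩
  have hgb : (g.map φ) ∣ (b.map φ) :=
    hdvd_pow b hb hdb ⟨a.map φ, by rw [← hprod]; ring⟩
  -- n ≥ 2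
  have hn2 : 2 ≤ n := by
    by_contra h2
    have hn1 : n = 1 := by omega
    subst hn1
    rw [pow_one] at hprod
    rcases hirr.isUnit_or_isUnit hprod.symm with hu | hu
    · exact not_isUnit_of_natDegree_pos _ (by rwa [ha.natDegree_map]) hu
    · exact not_isUnit_of_natDegree_pos _ (by rwa [hb.natDegree_map]) hu
  -- lift the divisibilities
  obtain ⟨cbar, hc⟩ := hga
  obtain ⟨dbar, hd⟩ := hgb
  obtain ⟨c, rfl⟩ := Polynomial.map_surjective φ hsurj cbar
  obtain ⟨d, rfl⟩ := Polynomial.map_surjective φ hsurj dbar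
  have hac : ∃ r, a = g * c + C (p : ℤ) * r := by
    have : (a - g * c).map φ = 0 := by
      rw [Polynomial.map_sub, Polynomial.map_mul, hc, sub_self]
    obtain ⟨r, hr⟩ := (map_zmod_eq_zero_iff hp _).mp this
    exact ⟨r, by linear_combination hr⟩
  have hbd : ∃ s, b = g * d + C (p : ℤ) * s := by
    have : (b - g * d).map φ = 0 := by
      rw [Polynomial.map_sub, Polynomial.map_mul, hd, sub_self]
    obtain ⟨s, hs⟩ := (map_zmod_eq_zero_iff hp _).mp this
    exact ⟨s, by linear_combination hs⟩
  obtain ⟨r, har⟩ := hac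
  obtain ⟨s, hbs⟩ := hbd
  -- the key computation
  have hgn : g ^ n = g ^ 2 * g ^ (n - 2) := by
    rw [← pow_add]
    congr 1
    omega
  have hM : g ^ 2 * (c * d - g ^ (n - 2)) =
      C (p : ℤ) * (h - (g * c * s + g * d * r + C (p : ℤ) * r * s)) := by
    have := hfgh
    rw [hab, har, hbs, hgn] at this
    linear_combination this
  have hM0 : ((c * d - g ^ (n - 2)).map φ) = 0 := by
    have hmap : (g.map φ) ^ 2 * ((c * d - g ^ (n - 2)).map φ) = 0 := by
      have := congrArg (Polynomial.map φ) hM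
      simpa [Polynomial.map_mul, Polynomial.map_pow, Polynomial.map_sub] using this
    have hg0 : (g.map φ) ≠ 0 := hgp.ne_zero
    rcases mul_eq_zero.mp hmap with h1 | h1
    · exact absurd (pow_eq_zero_iff (by norm_num)|>.mp h1) hg0
    · exact h1
  obtain ⟨N, hN⟩ := (map_zmod_eq_zero_iff hp _).mp hM0
  -- cancel C p
  have hp0 : (C (p : ℤ)) ≠ 0 := by
    simp [hp.pos.ne']
  have hT : h - (g * c * s + g * d * r + C (p : ℤ) * r * s) = g ^ 2 * N := by
    apply mul_left_cancel₀ hp0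
    rw [← hM, hN]
    ring
  have hh : h = g * c * s + g * d * r + C (p : ℤ) * r * s + g ^ 2 * N := by
    linear_combination hT
  apply hndvd
  rw [hh]
  simp only [Polynomial.map_add, Polynomial.map_mul, Polynomial.map_pow, Polynomial.map_C]
  have hCp : (C (φ (p : ℤ)) : Polynomial (ZMod p)) = 0 := by
    simp [hφ]
  rw [hCp]
  ring_nf
  exact ⟨Polynomial.map φ c * Polynomial.map φ s + Polynomial.map φ d * Polynomial.map φ r
    + g.map φ * Polynomial.map φ N, by ring⟩

theorem schonemann_criterion (f g h : Polynomial ℤ) (hf : f.Monic) (h0 : f.eval 0 ≠ 0)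
    (p : ℕ) (hp : p.Prime) (n : ℕ) (hn : 0 < n)
    (hfgh : f = g ^ n + C (p : ℤ) * h)
    (hirr : Irreducible (g.map (Int.castRingHom (ZMod p))))
    (hndvd : ¬ (g.map (Int.castRingHom (ZMod p)) ∣ h.map (Int.castRingHom (ZMod p)))) :
    Irreducible (f.map (Int.castRingHom ℚ)) := by
  haveI : Fact p.Prime := ⟨hp⟩
  rw [← Polynomial.IsPrimitive.Int.irreducible_iff_irreducible_map_cast hf.isPrimitive]
  constructor
  · intro hu
    apply hirr.not_isUnit
    have : IsUnit (f.map (Int.castRingHom (ZMod p))) := hu.map (mapRingHom _)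
    have hmapf : f.map (Int.castRingHom (ZMod p)) = (g.map (Int.castRingHom (ZMod p))) ^ n := by
      rw [hfgh]
      simp [Polynomial.map_add, Polynomial.map_pow, Polynomial.map_mul, Polynomial.map_C]
    rw [hmapf] at this
    exact (isUnit_pow_iff hn.ne').mp this
  · intro a b hab
    by_contra hcon
    push_neg at hcon
    obtain ⟨hua, hub⟩ := hcon
    have hlc : a.leadingCoeff * b.leadingCoeff = 1 := by
      rw [← leadingCoeff_mul, ← hab]
      exact hf
    rcases Int.mul_eq_one_iff_eq_one_or_neg_one.mp hlc with ⟨h1, h2⟩ | ⟨h1, h2⟩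
    · exact schonemann_core f g h p hp n hn hfgh hirr hndvd a b h1 h2 hua hub hab
    · refine schonemann_core f g h p hp n hn hfgh hirr hndvd (-a) (-b) ?_ ?_ ?_ ?_ ?_
      · simp [Polynomial.Monic, leadingCoeff_neg, h1]
      · simp [Polynomial.Monic, leadingCoeff_neg, h2]
      · simpa using hua
      · simpa using hub
      · rw [neg_mul_neg]; exact hab
end

section
/- Let f = a_0 + a_1 x + ... + a_n x^n ∈ ℤ[x] and p a prime such that p divides a_i for each i = 0,...,n-1, p does not divide a_n, and there exists an index k ∈ {0,...,n-1} with p^2 not dividing a_k. Let k_0 be the minimal such index. If f = g·h with g, h ∈ ℤ[x], then min(deg g, deg h) ≤ k_0. -/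
open Polynomial

theorem weintraub_criterion (f : Polynomial ℤ) (n : ℕ) (hn : f.natDegree = n) (hdeg : 1 ≤ n)
    (p : ℕ) (hp : p.Prime)
    (hdvd : ∀ i < n, (p : ℤ) ∣ f.coeff i)
    (hlead : ¬ (p : ℤ) ∣ f.coeff n)
    (k₀ : ℕ) (hk₀ : k₀ < n) (hk₀not : ¬ ((p : ℤ)^2 ∣ f.coeff k₀))
    (hk₀min : ∀ k < k₀, (p : ℤ)^2 ∣ f.coeff k)
    (g h : Polynomial ℤ) (hfgh : f = g * h) :
    min g.natDegree h.natDegree ≤ k₀ := by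
  by_contra hcon
  push_neg at hcon
  rw [lt_min_iff] at hcon
  obtain ⟨hkg, hkh⟩ := hcon
  haveI := Fact.mk hp
  set φ := Int.castRingHom (ZMod p) with hφ
  have hg0 : g ≠ 0 := by
    rintro rfl; exact hlead (by simp [hfgh])
  have hh0 : h ≠ 0 := by
    rintro rfl; exact hlead (by simp [hfgh])
  have hfn : f.coeff n = g.leadingCoeff * h.leadingCoeff := by
    rw [← leadingCoeff_mul, ← hfgh, leadingCoeff, hn]
  have hgl : ¬ (p : ℤ) ∣ g.leadingCoeff := fun d => hlead (hfn ▸ d.mul_right _)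
  have hhl : ¬ (p : ℤ) ∣ h.leadingCoeff := fun d => hlead (hfn ▸ d.mul_left _)
  have hGl : φ g.leadingCoeff ≠ 0 := by
    simpa [hφ, ZMod.intCast_zmod_eq_zero_iff_dvd] using hgl
  have hHl : φ h.leadingCoeff ≠ 0 := by
    simpa [hφ, ZMod.intCast_zmod_eq_zero_iff_dvd] using hhl
  have hdG : (g.map φ).natDegree = g.natDegree :=
    natDegree_map_of_leadingCoeff_ne_zero φ hGl
  have hdH : (h.map φ).natDegree = h.natDegree :=
    natDegree_map_of_leadingCoeff_ne_zero φ hHl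
  have hG0 : g.map φ ≠ 0 := fun h0 => hGl (by
    rw [leadingCoeff, ← coeff_map, h0, coeff_zero])
  have hH0 : h.map φ ≠ 0 := fun h0 => hHl (by
    rw [leadingCoeff, ← coeff_map, h0, coeff_zero])
  have hsum : g.natDegree + h.natDegree = n := by
    rw [← hn, hfgh, natDegree_mul hg0 hh0]
  have hF0 : f.map φ ≠ 0 := fun h0 => hlead (by
    have : φ (f.coeff n) = 0 := by rw [← coeff_map, h0, coeff_zero]
    exact (ZMod.intCast_zmod_eq_zero_iff_dvd _ _).mp this)
  have hFt : n ≤ (f.map φ).natTrailingDegree := by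
    apply le_natTrailingDegree hF0
    intro i hi
    rw [coeff_map]
    exact (ZMod.intCast_zmod_eq_zero_iff_dvd _ _).mpr (hdvd i hi)
  have hmap : f.map φ = g.map φ * h.map φ := by rw [hfgh, Polynomial.map_mul]
  have htmul : (f.map φ).natTrailingDegree
      = (g.map φ).natTrailingDegree + (h.map φ).natTrailingDegree := by
    rw [hmap, natTrailingDegree_mul hG0 hH0]
  have htG : (g.map φ).natTrailingDegree ≤ (g.map φ).natDegree :=
    natTrailingDegree_le_natDegree _
  have htH : (h.map φ).natTrailingDegree ≤ (h.map φ).natDegree :=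
    natTrailingDegree_le_natDegree _
  have hGeq : (g.map φ).natTrailingDegree = g.natDegree := by omega
  have hHeq : (h.map φ).natTrailingDegree = h.natDegree := by omega
  have hdivg : ∀ i < g.natDegree, (p : ℤ) ∣ g.coeff i := by
    intro i hi
    have : (g.map φ).coeff i = 0 :=
      coeff_eq_zero_of_lt_natTrailingDegree (by omega)
    rw [coeff_map] at this
    exact (ZMod.intCast_zmod_eq_zero_iff_dvd _ _).mp this
  have hdivh : ∀ i < h.natDegree, (p : ℤ) ∣ h.coeff i := by
    intro i hi
    have : (h.map φ).coeff i = 0 :=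
      coeff_eq_zero_of_lt_natTrailingDegree (by omega)
    rw [coeff_map] at this
    exact (ZMod.intCast_zmod_eq_zero_iff_dvd _ _).mp this
  apply hk₀not
  rw [hfgh, coeff_mul]
  apply Finset.dvd_sum
  intro x hx
  rw [Finset.HasAntidiagonal.mem_antidiagonal] at hx
  have h1 : x.1 < g.natDegree := by omega
  have h2 : x.2 < h.natDegree := by omega
  rw [sq]
  exact mul_dvd_mul (hdivg _ h1) (hdivh _ h2)
end

section
/- Let f = a_0 + a_1 x + ... + a_n x^n ∈ ℤ[x] with a_n ≠ 0, and let H_f = max over 0 ≤ i ≤ n-1 of |a_i|/|a_n|. If there exists an integer m ≥ H_f + 2 such that |f(m)| is prime, then f is irreducible over ℚ. -/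
open Polynomial

private lemma murty_multiset_one_lt_prod (s : Multiset ℝ) (h : ∀ x ∈ s, 1 < x) (hs : s ≠ 0) :
    1 < s.prod := by
  induction s using Multiset.induction_on with
  | empty => simp at hs
  | cons a t ih =>
    rcases eq_or_ne t 0 with rfl | ht
    · simpa using h a (by simp)
    · have ha := h a (Multiset.mem_cons_self a t)
      have hp := ih (fun x hx => h x (Multiset.mem_cons_of_mem hx)) ht
      rw [Multiset.prod_cons]
      nlinarith

private lemma murty_norm_multiset_prod (s : Multiset ℂ) :
    ‖s.prod‖ = (s.map (fun z => ‖z‖)).prod := by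
  induction s using Multiset.induction_on with
  | empty => simp
  | cons a t ih => simp [norm_mul, ih]

private lemma murty_eval_abs (g : Polynomial ℤ) (hg : 1 ≤ g.natDegree) (m : ℤ)
    (hroot : ∀ α : ℂ, ((g.map (Int.castRingHom ℂ)).IsRoot α) → 1 < ‖(m : ℂ) - α‖) :
    2 ≤ (g.eval m).natAbs := by
  set gc := g.map (Int.castRingHom ℂ) with hgc
  have hg0 : g ≠ 0 := fun h => by simp [h] at hg
  have hinj : Function.Injective (Int.castRingHom ℂ) := Int.cast_injective
  have hgc0 : gc ≠ 0 := by
    rw [hgc, Ne, Polynomial.map_eq_zero_iff hinj]; exact hg0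
  have hsplit : Splits gc := IsAlgClosed.splits gc
  have hcard : gc.roots.card = g.natDegree := by
    have h := splits_iff_card_roots.mp hsplit
    rw [h, hgc, natDegree_map_eq_of_injective hinj]
  have heq := hsplit.eq_prod_roots
  have heval : ((g.eval m : ℤ) : ℂ) = gc.eval (m : ℂ) := by
    rw [hgc, eval_intCast_map]; rfl
  have hlead : (1 : ℝ) ≤ ‖gc.leadingCoeff‖ := by
    have : gc.leadingCoeff = ((g.leadingCoeff : ℤ) : ℂ) := by
      rw [hgc, leadingCoeff_map_of_injective hinj]; rfl
    have h1 : (1 : ℤ) ≤ |g.leadingCoeff| :=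
      Int.one_le_abs (leadingCoeff_ne_zero.mpr hg0)
    rw [this, Complex.norm_intCast, ← Int.cast_abs]
    exact_mod_cast h1
  have hprod : 1 < (gc.roots.map (fun a => ‖(m : ℂ) - a‖)).prod := by
    apply murty_multiset_one_lt_prod
    · intro x hx
      obtain ⟨a, ha, rfl⟩ := Multiset.mem_map.mp hx
      exact hroot a ((mem_roots hgc0).mp ha)
    · intro hnil
      rw [Multiset.map_eq_zero] at hnil
      rw [hnil] at hcard
      simp at hcard
      omega
  have hnorm : ‖gc.eval (m : ℂ)‖ =
      ‖gc.leadingCoeff‖ * (gc.roots.map (fun a => ‖(m : ℂ) - a‖)).prod := by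
    conv_lhs => rw [heq]
    rw [eval_mul, eval_C, norm_mul]
    congr 1
    rw [eval_multiset_prod, Multiset.map_map, murty_norm_multiset_prod, Multiset.map_map]
    congr 1
    refine Multiset.map_congr rfl ?_
    intro a _
    simp
  have h1 : (1 : ℝ) < ‖gc.eval (m : ℂ)‖ := by
    rw [hnorm]
    nlinarith
  rw [← heval, Complex.norm_intCast] at h1
  have h3 : (1 : ℤ) < |g.eval m| := by
    rw [← Int.cast_abs] at h1
    exact_mod_cast h1
  rw [Int.abs_eq_natAbs] at h3
  omega

theorem murty_criterion (f : Polynomial ℤ) (n : ℕ) (hn : f.natDegree = n) (hdeg : 1 ≤ n)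
    (han : f.coeff n ≠ 0)
    (H : ℝ)
    (hH : H = (Finset.range n).sup' (Finset.nonempty_range_iff.mpr (by omega))
      (fun i => (|f.coeff i| : ℝ) / (|f.coeff n| : ℝ)))
    (m : ℤ) (hm : (m : ℝ) ≥ H + 2)
    (hprime : (f.eval m).natAbs.Prime) :
    Irreducible (f.map (Int.castRingHom ℚ)) := by
  have hf0 : f ≠ 0 := fun h => by simp [h] at han
  have hlead : f.leadingCoeff = f.coeff n := by rw [leadingCoeff, hn]
  have hanpos : (0 : ℝ) < |(f.coeff n : ℝ)| := by
    rw [← Int.cast_abs]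
    exact_mod_cast abs_pos.mpr han
  -- H ≥ each term
  have hHle : ∀ i < n, |(f.coeff i : ℝ)| / |(f.coeff n : ℝ)| ≤ H := by
    intro i hi
    rw [hH]
    exact Finset.le_sup' (fun i => (|f.coeff i| : ℝ) / (|f.coeff n| : ℝ))
      (Finset.mem_range.mpr hi)
  -- H ≥ 0
  have hH0 : 0 ≤ H :=
    le_trans (div_nonneg (abs_nonneg (f.coeff 0 : ℝ)) (abs_nonneg (f.coeff n : ℝ)))
      (hHle 0 (by omega))
  have hinj : Function.Injective (Int.castRingHom ℂ) := Int.cast_injective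
  set fc := f.map (Int.castRingHom ℂ) with hfc
  have hfc0 : fc ≠ 0 := by
    rw [hfc, Ne, Polynomial.map_eq_zero_iff hinj]; exact hf0
  -- root bound via Cauchy bound
  have hrootbound : ∀ α : ℂ, fc.IsRoot α → ‖α‖ < H + 1 := by
    intro α hα
    have h1 := hα.norm_lt_cauchyBound hfc0
    have h2 : (fc.cauchyBound : ℝ) ≤ H + 1 := by
      have hnd : fc.natDegree = n := by
        rw [hfc, natDegree_map_eq_of_injective hinj, hn]
      have hlc : fc.leadingCoeff = ((f.coeff n : ℤ) : ℂ) := by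
        rw [hfc, leadingCoeff_map_of_injective hinj, hlead]; rfl
      have hlcr : (‖fc.leadingCoeff‖₊ : ℝ) = |(f.coeff n : ℝ)| := by
        rw [coe_nnnorm, hlc, Complex.norm_intCast]
      have hsup : (((Finset.range n).sup fun i => ‖fc.coeff i‖₊ : NNReal) : ℝ)
          ≤ H * |(f.coeff n : ℝ)| := by
        have hHan : 0 ≤ H * |(f.coeff n : ℝ)| := by positivity
        rw [← Real.coe_toNNReal _ hHan, NNReal.coe_le_coe]
        apply Finset.sup_le
        intro i hi
        rw [← NNReal.coe_le_coe, Real.coe_toNNReal _ hHan]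
        have hci : ‖fc.coeff i‖ = |(f.coeff i : ℝ)| := by
          rw [hfc, coeff_map]
          rw [show (Int.castRingHom ℂ) (f.coeff i) = ((f.coeff i : ℤ) : ℂ) from rfl,
            Complex.norm_intCast]
        rw [coe_nnnorm, hci]
        have := hHle i (Finset.mem_range.mp hi)
        rw [div_le_iff₀ hanpos] at this
        exact this
      rw [cauchyBound, hnd, NNReal.coe_add, NNReal.coe_div, NNReal.coe_one, hlcr]
      have hdiv : (((Finset.range n).sup fun i => ‖fc.coeff i‖₊ : NNReal) : ℝ)
          / |(f.coeff n : ℝ)| ≤ H := (div_le_iff₀ hanpos).mpr hsup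
      linarith
    calc ‖α‖ = (‖α‖₊ : ℝ) := (coe_nnnorm α).symm
      _ < (fc.cauchyBound : ℝ) := by exact_mod_cast h1
      _ ≤ H + 1 := h2
  -- distance bound
  have hdist : ∀ (g : Polynomial ℤ), g ∣ f → ∀ α : ℂ,
      ((g.map (Int.castRingHom ℂ)).IsRoot α) → 1 < ‖(m : ℂ) - α‖ := by
    intro g hgf α hα
    obtain ⟨k, hk⟩ := hgf
    have hαf : fc.IsRoot α := by
      rw [hfc, hk, Polynomial.map_mul]
      simp only [IsRoot, eval_mul]
      rw [hα.eq_zero, zero_mul]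
    have hb := hrootbound α hαf
    have hmα : (m : ℝ) ≤ ‖(m : ℂ)‖ := by
      rw [← Complex.ofReal_intCast, Complex.norm_real]
      exact le_abs_self _
    calc (1 : ℝ) = (H + 2) - (H + 1) := by ring
      _ < ‖(m : ℂ)‖ - ‖α‖ := by linarith
      _ ≤ ‖(m : ℂ) - α‖ := by
          have := norm_sub_norm_le (m : ℂ) α
          linarith [norm_sub_norm_le (m : ℂ) α]
  -- key: nonunit factors of primPart have natDegree ≥ 1
  have hprim : f.primPart.IsPrimitive := f.isPrimitive_primPart
  have hcontent : f = C f.content * f.primPart := f.eq_C_content_mul_primPart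
  have hpdvd : f.primPart ∣ f := ⟨C f.content, by rw [mul_comm]; exact hcontent⟩
  have hirr : Irreducible f.primPart := by
    constructor
    · intro hu
      have := natDegree_eq_zero_of_isUnit hu
      rw [f.natDegree_primPart, hn] at this
      omega
    · intro g h hgh
      by_contra hcon
      push_neg at hcon
      obtain ⟨hgu, hhu⟩ := hcon
      have hdegs : ∀ q r : Polynomial ℤ, f.primPart = q * r → ¬ IsUnit q →
          1 ≤ q.natDegree := by
        intro q r hqr hqu
        by_contra hq
        push_neg at hq
        interval_cases hqn : q.natDegree
        · have hq0 : q = C (q.coeff 0) := eq_C_of_natDegree_eq_zero hqn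
          have : C (q.coeff 0) ∣ f.primPart := by
            rw [hqr, ← hq0]; exact dvd_mul_right q r
          exact hqu (hq0 ▸ isUnit_C.mpr (hprim _ this))
      have hg1 : 1 ≤ g.natDegree := hdegs g h hgh hgu
      have hh1 : 1 ≤ h.natDegree := hdegs h g (by rw [hgh, mul_comm]) hhu
      have hgdvdf : g ∣ f := (show g ∣ f.primPart from ⟨h, hgh⟩).trans hpdvd
      have hhdvdf : h ∣ f :=
        (show h ∣ f.primPart from ⟨g, by rw [hgh, mul_comm]⟩).trans hpdvd
      have hga := murty_eval_abs g hg1 m (hdist g hgdvdf)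
      have hha := murty_eval_abs h hh1 m (hdist h hhdvdf)
      -- contradiction with primality
      have heval : (f.eval m).natAbs =
          f.content.natAbs * ((g.eval m).natAbs * (h.eval m).natAbs) := by
        conv_lhs => rw [hcontent, hgh]
        rw [eval_mul, eval_mul, eval_C, Int.natAbs_mul, Int.natAbs_mul]
      have hdvd : (g.eval m).natAbs * (h.eval m).natAbs ∣ (f.eval m).natAbs :=
        ⟨f.content.natAbs, by rw [heval]; ring⟩
      rcases (Nat.Prime.eq_one_or_self_of_dvd hprime _ hdvd) with h1 | h2
      · nlinarith
      · have hgdvd : (g.eval m).natAbs ∣ (f.eval m).natAbs :=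
          dvd_trans ⟨(h.eval m).natAbs, rfl⟩ hdvd
        rcases Nat.Prime.eq_one_or_self_of_dvd hprime _ hgdvd with h3 | h4
        · omega
        · nlinarith
  -- transfer to ℚ
  have hirrQ : Irreducible (f.primPart.map (Int.castRingHom ℚ)) :=
    (Polynomial.IsPrimitive.Int.irreducible_iff_irreducible_map_cast hprim).mp hirr
  have hc0 : f.content ≠ 0 := fun h => hf0 (content_eq_zero_iff.mp h)
  have hmap : f.map (Int.castRingHom ℚ) =
      f.primPart.map (Int.castRingHom ℚ) * C ((f.content : ℚ)) := by
    conv_lhs => rw [hcontent]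
    rw [Polynomial.map_mul, map_C, mul_comm]
    rfl
  have hassoc : Associated (f.primPart.map (Int.castRingHom ℚ)) (f.map (Int.castRingHom ℚ)) := by
    have hu : IsUnit (C ((f.content : ℚ))) := isUnit_C.mpr
      (isUnit_iff_ne_zero.mpr (by exact_mod_cast hc0))
    rw [hmap]
    exact (associated_mul_unit_left _ _ hu).symm
  exact hassoc.irreducible hirrQ
end

section
/- Let f = a_0 + a_1 x + ... + a_n x^n, f_1 = b_0 + ... + b_r x^r, f_2 = c_0 + ... + c_{n-r} x^{n-r} be nonconstant polynomials in ℤ[x] with f = f_1 · f_2. Suppose there exist a prime p and positive integers k ≥ 2 and j ≤ n such that p^k divides gcd(a_0, a_1, ..., a_{j-1}), p^{k+1} does not divide a_0, and gcd(k, j) = 1. If p divides b_0 and p divides c_0, then p divides a_j. -/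
open Polynomial Finset

private lemma sk_gauss_aux (p k j s t : ℕ) [Fact p.Prime] (hj : 0 < j)
    (f₁ f₂ : Polynomial ℤ)
    (hb0 : f₁.coeff 0 ≠ 0) (hc0 : f₂.coeff 0 ≠ 0)
    (hs : padicValInt p (f₁.coeff 0) = s) (ht : padicValInt p (f₂.coeff 0) = t)
    (Hf : ∀ i, (f₁ * f₂).coeff i ≠ 0 →
      j * s + j * t ≤ j * padicValInt p ((f₁ * f₂).coeff i) + k * i) :
    (∀ i, f₁.coeff i ≠ 0 → j * s ≤ j * padicValInt p (f₁.coeff i) + k * i) ∧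
    (∀ i, f₂.coeff i ≠ 0 → j * t ≤ j * padicValInt p (f₂.coeff i) + k * i) := by
  classical
  set w₁ : ℕ → ℕ := fun i => j * padicValInt p (f₁.coeff i) + k * i with hw₁
  set w₂ : ℕ → ℕ := fun i => j * padicValInt p (f₂.coeff i) + k * i with hw₂
  have h01 : (0 : ℕ) ∈ f₁.support := mem_support_iff.mpr hb0
  have h02 : (0 : ℕ) ∈ f₂.support := mem_support_iff.mpr hc0
  have hne₁ : f₁.support.Nonempty := ⟨0, h01⟩
  have hne₂ : f₂.support.Nonempty := ⟨0, h02⟩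
  set W₁ := f₁.support.inf' hne₁ w₁ with hW₁def
  set W₂ := f₂.support.inf' hne₂ w₂ with hW₂def
  set T₁ := f₁.support.filter (fun i => w₁ i = W₁) with hT₁def
  set T₂ := f₂.support.filter (fun i => w₂ i = W₂) with hT₂def
  have hT₁ : T₁.Nonempty := by
    obtain ⟨i, hi, hieq⟩ := Finset.exists_mem_eq_inf' hne₁ w₁
    exact ⟨i, Finset.mem_filter.mpr ⟨hi, hieq.symm⟩⟩
  have hT₂ : T₂.Nonempty := by
    obtain ⟨i, hi, hieq⟩ := Finset.exists_mem_eq_inf' hne₂ w₂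
    exact ⟨i, Finset.mem_filter.mpr ⟨hi, hieq.symm⟩⟩
  set i₁ := T₁.min' hT₁ with hi₁def
  set i₂ := T₂.min' hT₂ with hi₂def
  have hi₁mem := Finset.mem_filter.mp (T₁.min'_mem hT₁)
  have hi₂mem := Finset.mem_filter.mp (T₂.min'_mem hT₂)
  have hB1 : f₁.coeff i₁ ≠ 0 := mem_support_iff.mp hi₁mem.1
  have hC2 : f₂.coeff i₂ ≠ 0 := mem_support_iff.mp hi₂mem.1
  have hwi₁ : w₁ i₁ = W₁ := hi₁mem.2
  have hwi₂ : w₂ i₂ = W₂ := hi₂mem.2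
  have hmin₁ : ∀ x ∈ f₁.support, x < i₁ → W₁ + 1 ≤ w₁ x := by
    intro x hx hlt
    have h1 : W₁ ≤ w₁ x := Finset.inf'_le w₁ hx
    rcases Nat.lt_or_ge W₁ (w₁ x) with h | h
    · omega
    · have heq : w₁ x = W₁ := le_antisymm (by omega) h1
      have : i₁ ≤ x := T₁.min'_le x (Finset.mem_filter.mpr ⟨hx, heq⟩)
      omega
  have hmin₂ : ∀ x ∈ f₂.support, x < i₂ → W₂ + 1 ≤ w₂ x := by
    intro x hx hlt
    have h1 : W₂ ≤ w₂ x := Finset.inf'_le w₂ hx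
    rcases Nat.lt_or_ge W₂ (w₂ x) with h | h
    · omega
    · have heq : w₂ x = W₂ := le_antisymm (by omega) h1
      have : i₂ ≤ x := T₂.min'_le x (Finset.mem_filter.mpr ⟨hx, heq⟩)
      omega
  set vb := padicValInt p (f₁.coeff i₁) with hvb
  set vc := padicValInt p (f₂.coeff i₂) with hvc
  set e := vb + vc with he
  set m := i₁ + i₂ with hm
  -- the key non-divisibility
  have key : ¬ ((p : ℤ) ^ (e + 1) ∣ (f₁ * f₂).coeff m) := by
    rw [coeff_mul]
    have hmem : (i₁, i₂) ∈ Finset.HasAntidiagonal.antidiagonal m := Finset.HasAntidiagonal.mem_antidiagonal.mpr rfl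
    rw [← Finset.insert_erase hmem, Finset.sum_insert (Finset.notMem_erase _ _)]
    intro hdvd
    have hrest : (p : ℤ) ^ (e + 1) ∣
        ∑ x ∈ (Finset.HasAntidiagonal.antidiagonal m).erase (i₁, i₂), f₁.coeff x.1 * f₂.coeff x.2 := by
      apply Finset.dvd_sum
      intro x hx
      by_cases hz : f₁.coeff x.1 * f₂.coeff x.2 = 0
      · rw [hz]; exact dvd_zero _
      obtain ⟨hz1, hz2⟩ := mul_ne_zero_iff.mp hz
      have hx1s : x.1 ∈ f₁.support := mem_support_iff.mpr hz1
      have hx2s : x.2 ∈ f₂.support := mem_support_iff.mpr hz2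
      have hxa : x.1 + x.2 = m := Finset.HasAntidiagonal.mem_antidiagonal.mp (Finset.mem_of_mem_erase hx)
      have hxne : x ≠ (i₁, i₂) := Finset.ne_of_mem_erase hx
      set v1 := padicValInt p (f₁.coeff x.1) with hv1
      set v2 := padicValInt p (f₂.coeff x.2) with hv2
      have hlt : x.1 < i₁ ∨ x.2 < i₂ := by
        by_contra hcon
        push_neg at hcon
        have hx1 : x.1 = i₁ := by omega
        have hx2 : x.2 = i₂ := by omega
        exact hxne (Prod.ext hx1 hx2)
      have hsum1 : W₁ + W₂ + 1 ≤ w₁ x.1 + w₂ x.2 := by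
        rcases hlt with h | h
        · have := hmin₁ x.1 hx1s h
          have := Finset.inf'_le w₂ hx2s
          omega
        · have := hmin₂ x.2 hx2s h
          have := Finset.inf'_le w₁ hx1s
          omega
      have hw1x : w₁ x.1 = j * v1 + k * x.1 := rfl
      have hw2x : w₂ x.2 = j * v2 + k * x.2 := rfl
      have hWe1 : W₁ = j * vb + k * i₁ := hwi₁.symm
      have hWe2 : W₂ = j * vc + k * i₂ := hwi₂.symm
      have hkk : k * x.1 + k * x.2 = k * i₁ + k * i₂ := by
        rw [← Nat.mul_add, ← Nat.mul_add, hxa]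
      have hlin : j * (vb + vc) + 1 ≤ j * (v1 + v2) := by
        rw [Nat.mul_add, Nat.mul_add]
        rw [hw1x, hw2x, hWe1, hWe2] at hsum1
        omega
      have hev : e + 1 ≤ v1 + v2 := by
        have h' := Nat.lt_of_mul_lt_mul_left (a := j)
          (show j * (vb + vc) < j * (v1 + v2) by omega)
        omega
      rw [padicValInt_dvd_iff]
      right
      rw [padicValInt.mul hz1 hz2]
      omega
    have hmain : (p : ℤ) ^ (e + 1) ∣ f₁.coeff i₁ * f₂.coeff i₂ := by
      have h' := dvd_sub hdvd hrest
      simpa using h' 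
    rw [padicValInt_dvd_iff] at hmain
    rcases hmain with h | h
    · exact mul_ne_zero hB1 hC2 h
    · rw [padicValInt.mul hB1 hC2] at h
      omega
  have hm0 : (f₁ * f₂).coeff m ≠ 0 := by
    intro h
    exact key (h ▸ dvd_zero _)
  have hvm : padicValInt p ((f₁ * f₂).coeff m) ≤ e := by
    by_contra hcon
    exact key ((padicValInt_dvd_iff (e + 1) _).mpr (Or.inr (by omega)))
  have HW : j * s + j * t ≤ W₁ + W₂ := by
    have h1 := Hf m hm0
    have h2 : j * padicValInt p ((f₁ * f₂).coeff m) + k * m ≤ W₁ + W₂ := by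
      have hWe1 : W₁ = j * vb + k * i₁ := hwi₁.symm
      have hWe2 : W₂ = j * vc + k * i₂ := hwi₂.symm
      have hkk : k * m = k * i₁ + k * i₂ := by rw [hm, Nat.mul_add]
      have hje : j * padicValInt p ((f₁ * f₂).coeff m) ≤ j * vb + j * vc := by
        calc j * padicValInt p ((f₁ * f₂).coeff m) ≤ j * e := Nat.mul_le_mul_left j hvm
        _ = j * vb + j * vc := by rw [he, Nat.mul_add]
      omega
    omega
  have hW1le : W₁ ≤ j * s := by
    have h' : W₁ ≤ w₁ 0 := Finset.inf'_le w₁ h01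
    have h0 : w₁ 0 = j * s := by simp [hw₁, hs]
    omega
  have hW2le : W₂ ≤ j * t := by
    have h' : W₂ ≤ w₂ 0 := Finset.inf'_le w₂ h02
    have h0 : w₂ 0 = j * t := by simp [hw₂, ht]
    omega
  constructor
  · intro i hi
    have h1 : W₁ ≤ w₁ i := Finset.inf'_le w₁ (mem_support_iff.mpr hi)
    have h2 : w₁ i = j * padicValInt p (f₁.coeff i) + k * i := rfl
    omega
  · intro i hi
    have h1 : W₂ ≤ w₂ i := Finset.inf'_le w₂ (mem_support_iff.mpr hi)
    have h2 : w₂ i = j * padicValInt p (f₂.coeff i) + k * i := rfl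
    omega

theorem singh_kumar_lemma (f f₁ f₂ : Polynomial ℤ) (n : ℕ) (hn : f.natDegree = n)
    (hf₁ : 0 < f₁.natDegree) (hf₂ : 0 < f₂.natDegree)
    (hff : f = f₁ * f₂)
    (p : ℕ) (hp : p.Prime) (k j : ℕ) (hk : 2 ≤ k) (hj : 0 < j) (hjn : j ≤ n)
    (hdvd : ∀ i < j, (p : ℤ)^k ∣ f.coeff i)
    (hnot : ¬ ((p : ℤ)^(k+1) ∣ f.coeff 0))
    (hcop : Nat.gcd k j = 1)
    (hb : (p : ℤ) ∣ f₁.coeff 0) (hc : (p : ℤ) ∣ f₂.coeff 0) :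
    (p : ℤ) ∣ f.coeff j := by
  haveI : Fact p.Prime := ⟨hp⟩
  have ha0 : f.coeff 0 ≠ 0 := by
    intro h
    exact hnot (h ▸ dvd_zero _)
  have ha0m : f.coeff 0 = f₁.coeff 0 * f₂.coeff 0 := by
    rw [hff, mul_coeff_zero]
  have hb0 : f₁.coeff 0 ≠ 0 := fun h => ha0 (by rw [ha0m, h, zero_mul])
  have hc0 : f₂.coeff 0 ≠ 0 := fun h => ha0 (by rw [ha0m, h, mul_zero])
  set s := padicValInt p (f₁.coeff 0) with hs
  set t := padicValInt p (f₂.coeff 0) with ht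
  have hva0 : padicValInt p (f.coeff 0) = k := by
    have h1 : k ≤ padicValInt p (f.coeff 0) := by
      have := hdvd 0 hj
      rw [padicValInt_dvd_iff] at this
      rcases this with h | h
      · exact absurd h ha0
      · exact h
    have h2 : ¬ (k + 1 ≤ padicValInt p (f.coeff 0)) := by
      intro h
      exact hnot ((padicValInt_dvd_iff (k + 1) _).mpr (Or.inr h))
    omega
  have hst : s + t = k := by
    rw [hs, ht, ← padicValInt.mul hb0 hc0, ← ha0m, hva0]
  have hs1 : 1 ≤ s := by
    have : (p : ℤ) ^ 1 ∣ f₁.coeff 0 := by rwa [pow_one]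
    rw [padicValInt_dvd_iff] at this
    rcases this with h | h
    · exact absurd h hb0
    · exact h
  have ht1 : 1 ≤ t := by
    have : (p : ℤ) ^ 1 ∣ f₂.coeff 0 := by rwa [pow_one]
    rw [padicValInt_dvd_iff] at this
    rcases this with h | h
    · exact absurd h hc0
    · exact h
  have Hf : ∀ i, (f₁ * f₂).coeff i ≠ 0 →
      j * s + j * t ≤ j * padicValInt p ((f₁ * f₂).coeff i) + k * i := by
    intro i hi
    have hjk : j * s + j * t = j * k := by rw [← Nat.mul_add, hst]
    rw [hjk]
    rcases Nat.lt_or_ge i j with h | h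
    · have hd := hdvd i h
      rw [hff] at hd
      rw [padicValInt_dvd_iff] at hd
      rcases hd with h' | h'
      · exact absurd h' hi
      · have : j * k ≤ j * padicValInt p ((f₁ * f₂).coeff i) := Nat.mul_le_mul_left j h'
        omega
    · have : k * j ≤ k * i := Nat.mul_le_mul_left k h
      have hc : j * k = k * j := Nat.mul_comm j k
      omega
  obtain ⟨Q₁, Q₂⟩ := sk_gauss_aux p k j s t hj f₁ f₂ hb0 hc0 rfl rfl Hf
  rw [hff, coeff_mul]
  apply Finset.dvd_sum
  intro x hx
  have hxa : x.1 + x.2 = j := Finset.HasAntidiagonal.mem_antidiagonal.mp hx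
  by_cases hz : f₁.coeff x.1 * f₂.coeff x.2 = 0
  · rw [hz]; exact dvd_zero _
  obtain ⟨hz1, hz2⟩ := mul_ne_zero_iff.mp hz
  rcases Nat.eq_zero_or_pos x.1 with h10 | h1pos
  · rw [h10]
    exact dvd_mul_of_dvd_left hb _
  -- x.1 ≥ 1 case
  set β := padicValInt p (f₁.coeff x.1) with hβ
  set γ := padicValInt p (f₂.coeff x.2) with hγ
  have hq1 : j * s ≤ j * β + k * x.1 := Q₁ x.1 hz1
  have hq2 : j * t ≤ j * γ + k * x.2 := Q₂ x.2 hz2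
  -- strictness at x.1 ≥ 1
  have hq1s : j * s + 1 ≤ j * β + k * x.1 := by
    rcases Nat.lt_or_ge (j * s) (j * β + k * x.1) with h | h
    · omega
    · exfalso
      have heq : j * s = j * β + k * x.1 := by omega
      have hdvdj : j ∣ k * x.1 := by
        have h1 : j ∣ j * s := Dvd.intro s rfl
        have h2 : j ∣ j * β := Dvd.intro β rfl
        have : k * x.1 = j * s - j * β := by omega
        rw [this]
        exact Nat.dvd_sub h1 h2
      have hjx : j ∣ x.1 := (Nat.Coprime.dvd_of_dvd_mul_left
        (Nat.coprime_comm.mp hcop) hdvdj)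
      have hxj : j ≤ x.1 := Nat.le_of_dvd h1pos hjx
      have hkj : k * j ≤ k * x.1 := Nat.mul_le_mul_left k hxj
      have hsk : s < k := by omega
      have hjs : j * s < j * k := (Nat.mul_lt_mul_left hj).mpr hsk
      have hcomm : j * k = k * j := Nat.mul_comm j k
      omega
  have hkk : k * x.1 + k * x.2 = k * j := by rw [← Nat.mul_add, hxa]
  have hjk : j * s + j * t = k * j := by rw [← Nat.mul_add, hst, Nat.mul_comm]
  have hβγ : 1 ≤ j * β + j * γ := by omega
  have h1bg : 1 ≤ β + γ := by
    by_contra hcon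
    push_neg at hcon
    have hb0' : β = 0 := by omega
    have hg0 : γ = 0 := by omega
    rw [hb0', hg0] at hβγ
    simp at hβγ
  rw [← pow_one (p : ℤ), padicValInt_dvd_iff]
  right
  rw [padicValInt.mul hz1 hz2]
  omega
end

section
/- Let f = a_0 + a_1 x + ... + a_n x^n ∈ ℤ[x] be a primitive polynomial such that every complex zero θ of f satisfies |θ| > d, where a_0 = ±p^k · d for positive integers k, d and a prime p not dividing a_1 · d. Then f is irreducible in ℤ[x]. -/
open Polynomial

private lemma sk_one_le_prod (s : Multiset ℝ) (h : ∀ x ∈ s, (1:ℝ) ≤ x) : 1 ≤ s.prod := by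
  induction s using Multiset.induction with
  | empty => simp
  | cons a t ih =>
    simp only [Multiset.prod_cons]
    have ha := h a (Multiset.mem_cons_self a t)
    have ht := ih (fun x hx => h x (Multiset.mem_cons_of_mem hx))
    nlinarith

private lemma sk_multiset_lt (d : ℝ) (hd : 1 ≤ d) (s : Multiset ℝ)
    (hs : ∀ x ∈ s, d < x) (hne : s ≠ 0) : d < s.prod := by
  obtain ⟨a, ha⟩ := Multiset.card_pos_iff_exists_mem.mp (Multiset.card_pos.mpr hne)
  obtain ⟨t, rfl⟩ := Multiset.exists_cons_of_mem ha
  rw [Multiset.prod_cons]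
  have hda : d < a := hs a (Multiset.mem_cons_self a t)
  have ht : 1 ≤ t.prod := by
    refine sk_one_le_prod t ?_
    intro x hx
    exact le_trans hd (le_of_lt (hs x (Multiset.mem_cons_of_mem hx)))
  calc d < a := hda
    _ = a * 1 := (mul_one a).symm
    _ ≤ a * t.prod := by
        exact mul_le_mul_of_nonneg_left ht (le_trans (by linarith) hda.le)

private lemma sk_key (g : ℤ[X]) (d : ℕ) (hd : 0 < d) (hg : 0 < g.natDegree)
    (hroots : ∀ θ : ℂ, Polynomial.aeval θ g = 0 → (d : ℝ) < ‖θ‖) :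
    (d : ℤ) < |g.coeff 0| := by
  have hg0 : g ≠ 0 := fun h => by simp [h] at hg
  set G : ℂ[X] := g.map (Int.castRingHom ℂ) with hG
  have hGne : G ≠ 0 := (Polynomial.map_ne_zero_iff Int.cast_injective).mpr hg0
  have hGdeg : G.natDegree = g.natDegree := natDegree_map_eq_of_injective Int.cast_injective g
  have hcard : Multiset.card G.roots = G.natDegree :=
    splits_iff_card_roots.mp (IsAlgClosed.splits G)
  have heq : G = C G.leadingCoeff * (G.roots.map (fun a => X - C a)).prod :=
    (C_leadingCoeff_mul_prod_multiset_X_sub_C hcard).symm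
  have heval : G.eval 0 = G.leadingCoeff * (G.roots.map (fun a => -a)).prod := by
    conv_lhs => rw [heq]
    rw [eval_mul, eval_C, eval_multiset_prod, Multiset.map_map]
    congr 1
    congr 1
    exact Multiset.map_congr rfl (fun a _ => by simp [Function.comp])
  have habs : ‖G.eval 0‖
      = ‖G.leadingCoeff‖ * ((G.roots.map (fun a => -a)).map (fun z : ℂ => ‖z‖)).prod := by
    rw [heval, norm_mul]; congr 1; exact map_multiset_prod (normHom : ℂ →*₀ ℝ) _
  have hlc : (1 : ℝ) ≤ ‖G.leadingCoeff‖ := by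
    have : G.leadingCoeff = (g.leadingCoeff : ℂ) :=
      leadingCoeff_map_of_leadingCoeff_ne_zero _ (by simpa using leadingCoeff_ne_zero.mpr hg0)
    rw [this, Complex.norm_intCast]
    have : (1 : ℤ) ≤ |g.leadingCoeff| := Int.one_le_abs (leadingCoeff_ne_zero.mpr hg0)
    exact_mod_cast this
  have hd1 : (1 : ℝ) ≤ (d : ℝ) := by exact_mod_cast hd
  have hprodlt : (d : ℝ) < ((G.roots.map (fun a => -a)).map (fun z : ℂ => ‖z‖)).prod := by
    apply sk_multiset_lt _ hd1
    · intro x hx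
      simp only [Multiset.mem_map] at hx
      obtain ⟨y, ⟨θ, hθ, rfl⟩, rfl⟩ := hx
      have : Polynomial.aeval θ g = 0 := by
        rw [aeval_def, ← eval_map]
        have := (mem_roots hGne).mp hθ
        simpa [IsRoot, hG, algebraMap_int_eq] using this
      simpa using hroots θ this
    · intro h
      have : Multiset.card G.roots = 0 := by
        have := congrArg Multiset.card h
        simpa using this
      rw [hcard, hGdeg] at this
      omega
  have hfin : (d : ℝ) < ‖G.eval 0‖ := by
    rw [habs]
    calc (d : ℝ) < ((G.roots.map (fun a => -a)).map (fun z : ℂ => ‖z‖)).prod := hprodlt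
      _ = 1 * _ := (one_mul _).symm
      _ ≤ _ := by
          apply mul_le_mul_of_nonneg_right hlc
          apply Multiset.prod_nonneg
          intro x hx
          simp only [Multiset.mem_map] at hx
          obtain ⟨y, _, rfl⟩ := hx
          exact norm_nonneg _
  have : G.eval 0 = ((g.coeff 0 : ℤ) : ℂ) := by
    rw [hG, eval_map, eval₂_at_zero]
    simp
  rw [this, Complex.norm_intCast] at hfin
  exact_mod_cast hfin

private lemma sk_aux (p : ℕ) (hp : p.Prime) (k d : ℕ) (hk : 0 < k) (hd : 0 < d)
    (g0 h0 g1 h1 a1 : ℤ)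
    (hmul : g0 * h0 = (p : ℤ)^k * d ∨ g0 * h0 = -((p : ℤ)^k * d))
    (ha1 : a1 = g0 * h1 + g1 * h0)
    (hpa1 : ¬ (p : ℤ) ∣ a1 * d)
    (hph0 : (p : ℤ) ∣ h0)
    (hg0 : (d : ℤ) < |g0|) : False := by
  have hpZ : Prime (p : ℤ) := Nat.prime_iff_prime_int.mp hp
  have hpg0 : ¬ (p : ℤ) ∣ g0 := by
    intro hdvd
    have h2 : (p : ℤ) ∣ a1 := by
      rw [ha1]; exact dvd_add (hdvd.mul_right _) (hph0.mul_left _)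
    exact hpa1 (h2.mul_right d)
  have hcop : IsCoprime g0 ((p : ℤ)^k) :=
    (IsCoprime.pow_right ((hpZ.coprime_iff_not_dvd.mpr hpg0).symm))
  have hdvdd : g0 ∣ (d : ℤ) := by
    have h1 : g0 ∣ (p : ℤ)^k * d := by
      rcases hmul with h | h
      · exact h ▸ Dvd.intro h0 rfl
      · have : g0 ∣ -((p : ℤ)^k * d) := h ▸ Dvd.intro h0 rfl
        exact (dvd_neg.mp this)
    exact hcop.dvd_of_dvd_mul_left h1
  have : |g0| ≤ (d : ℤ) := Int.le_of_dvd (by exact_mod_cast hd) ((abs_dvd _ _).mpr hdvdd)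
  omega

theorem singh_kumar_j1 (f : Polynomial ℤ) (n : ℕ) (hn : f.natDegree = n) (hdeg : 1 ≤ n)
    (han : f.coeff n ≠ 0) (hprim : f.IsPrimitive)
    (p : ℕ) (hp : p.Prime) (k d : ℕ) (hk : 0 < k) (hd : 0 < d)
    (ha0 : f.coeff 0 = (p : ℤ)^k * d ∨ f.coeff 0 = -((p : ℤ)^k * d))
    (hpd : ¬ (p : ℤ) ∣ f.coeff 1 * d)
    (hzeros : ∀ θ : ℂ, Polynomial.aeval θ f = 0 → (d : ℝ) < ‖θ‖) :
    Irreducible f := by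
  constructor
  · intro hu
    have := natDegree_eq_zero_of_isUnit hu
    omega
  · rintro a b rfl
    by_contra hcon
    push_neg at hcon
    obtain ⟨hua, hub⟩ := hcon
    -- both factors have positive degree
    have hane : a ≠ 0 := by rintro rfl; simp at han
    have hbne : b ≠ 0 := by rintro rfl; simp at han
    have hda : 0 < a.natDegree := by
      rcases Nat.eq_zero_or_pos a.natDegree with h | h
      swap
      · exact h
      exfalso
      apply hua
      rw [Polynomial.eq_C_of_natDegree_eq_zero h]
      rw [isUnit_C]
      apply hprim (a.coeff 0)
      exact ⟨b, by conv_lhs => rw [Polynomial.eq_C_of_natDegree_eq_zero h]⟩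
    have hdb : 0 < b.natDegree := by
      rcases Nat.eq_zero_or_pos b.natDegree with h | h
      swap
      · exact h
      · exfalso
        apply hub
        rw [Polynomial.eq_C_of_natDegree_eq_zero h]
        rw [isUnit_C]
        apply hprim (b.coeff 0)
        refine ⟨a, ?_⟩
        conv_lhs => rw [Polynomial.eq_C_of_natDegree_eq_zero h]
        ring
    -- roots of a and b
    have hza : ∀ θ : ℂ, Polynomial.aeval θ a = 0 → (d : ℝ) < ‖θ‖ := by
      intro θ hθ
      exact hzeros θ (by rw [map_mul, hθ, zero_mul])
    have hzb : ∀ θ : ℂ, Polynomial.aeval θ b = 0 → (d : ℝ) < ‖θ‖ := by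
      intro θ hθ
      exact hzeros θ (by rw [map_mul, hθ, mul_zero])
    have hka : (d : ℤ) < |a.coeff 0| := sk_key a d hd hda hza
    have hkb : (d : ℤ) < |b.coeff 0| := sk_key b d hd hdb hzb
    -- coefficient identities
    have h0 : (a * b).coeff 0 = a.coeff 0 * b.coeff 0 := by rw [mul_coeff_zero]
    have h1 : (a * b).coeff 1 = a.coeff 0 * b.coeff 1 + a.coeff 1 * b.coeff 0 := by
      rw [coeff_mul, Finset.Nat.sum_antidiagonal_eq_sum_range_succ_mk]
      simp [Finset.sum_range_succ]
    rw [h0] at ha0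
    -- p divides one of the constant terms
    have hpdvd : (p : ℤ) ∣ a.coeff 0 * b.coeff 0 := by
      have hpk : (p : ℤ) ∣ (p : ℤ)^k * d :=
        (dvd_pow_self (p:ℤ) (by omega : k ≠ 0)).mul_right _
      rcases ha0 with h | h
      · rw [h]; exact hpk
      · rw [h]; exact hpk.neg_right
    have hpZ : Prime (p : ℤ) := Nat.prime_iff_prime_int.mp hp
    rcases hpZ.dvd_mul.mp hpdvd with hpa | hpb
    · exact sk_aux p hp k d hk hd (b.coeff 0) (a.coeff 0) (b.coeff 1) (a.coeff 1)
        ((a * b).coeff 1)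
        (by rcases ha0 with h | h
            · exact Or.inl (by rw [← h]; ring)
            · exact Or.inr (by rw [← h]; ring))
        (by rw [h1]; ring) hpd hpa hkb
    · exact sk_aux p hp k d hk hd (a.coeff 0) (b.coeff 0) (a.coeff 1) (b.coeff 1)
        ((a * b).coeff 1)
        ha0 h1 hpd hpb hka
end

section
/- Let f = a_0 + a_1 x + ... + a_n x^n ∈ ℤ[x] be a primitive polynomial such that every complex zero θ of f satisfies |θ| > d, where a_0 = ±p^k · d, gcd(a_0, a_1) = p^k, for positive integers k, d with k odd, and p a prime not dividing a_2 · d. Then f is irreducible in ℤ[x]. -/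
open Polynomial

private lemma sk_root_bound (f g h : Polynomial ℤ) (hf : f = g * h) (hf0 : f ≠ 0)
    (hdeg : 0 < h.natDegree) (d : ℕ) (hd : 0 < d)
    (hzeros : ∀ θ : ℂ, Polynomial.aeval θ f = 0 → (d : ℝ) < ‖θ‖) :
    (d : ℤ) < |h.coeff 0| := by
  have hh0 : h ≠ 0 := by
    rintro rfl
    exact hf0 (by simp [hf])
  have hinj : Function.Injective (Int.castRingHom ℂ) := Int.cast_injective
  set H := h.map (Int.castRingHom ℂ) with hH
  have hH0 : H ≠ 0 := by
    rw [hH, Ne, Polynomial.map_eq_zero_iff hinj]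
    exact hh0
  have hroots : ∀ θ ∈ H.roots, (d : ℝ) < ‖θ‖ := by
    intro θ hθ
    apply hzeros
    have h1 : Polynomial.eval θ H = 0 := Polynomial.isRoot_of_mem_roots hθ
    have h2 : Polynomial.aeval θ h = 0 := by
      rwa [Polynomial.aeval_def, ← Polynomial.eval_map]
    rw [hf, map_mul, h2, mul_zero]
  have hsplits : H.Splits := IsAlgClosed.splits H
  have hcard : H.roots.card = H.natDegree := Polynomial.splits_iff_card_roots.mp hsplits
  have hHdeg : 0 < H.natDegree := by
    rwa [hH, Polynomial.natDegree_map_eq_of_injective hinj]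
  have hkey : H = Polynomial.C H.leadingCoeff * (H.roots.map fun a => X - Polynomial.C a).prod :=
    hsplits.eq_prod_roots
  have hc0 : H.coeff 0 = H.leadingCoeff * (H.roots.map fun a => -a).prod := by
    rw [Polynomial.coeff_zero_eq_eval_zero]
    conv_lhs => rw [hkey]
    rw [Polynomial.eval_mul, Polynomial.eval_C, Polynomial.eval_multiset_prod, Multiset.map_map]
    simp
  have habs : ‖H.coeff 0‖
      = ‖H.leadingCoeff‖ * (H.roots.map fun a => ‖a‖).prod := by
    rw [hc0, norm_mul, show ‖(H.roots.map fun a => -a).prod‖ = (normHom : ℂ →*₀ ℝ) (H.roots.map fun a => -a).prod from rfl, ← Multiset.prod_hom _ (normHom : ℂ →*₀ ℝ), Multiset.map_map]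
    congr 2
    ext a
    simp
  -- pick a root
  obtain ⟨r, hr⟩ : ∃ r, r ∈ H.roots := Multiset.card_pos_iff_exists_mem.mp (by omega)
  obtain ⟨rest, hrest⟩ := Multiset.exists_cons_of_mem hr
  have hrestmem : ∀ x ∈ rest.map (fun a => ‖a‖), (1 : ℝ) ≤ x := by
    intro x hx
    obtain ⟨a, ha, rfl⟩ := Multiset.mem_map.mp hx
    have : a ∈ H.roots := by rw [hrest]; exact Multiset.mem_cons_of_mem ha
    have := hroots a this
    have hd1 : (1 : ℝ) ≤ (d : ℝ) := by exact_mod_cast hd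
    linarith
  have hprodrest : (1 : ℝ) ≤ (rest.map fun a => ‖a‖).prod :=
    Multiset.one_le_prod hrestmem
  have hprodgt : (d : ℝ) < (H.roots.map fun a => ‖a‖).prod := by
    rw [hrest, Multiset.map_cons, Multiset.prod_cons]
    have hrd := hroots r hr
    have hd0 : (0 : ℝ) < (d : ℝ) := by exact_mod_cast hd
    nlinarith
  have hlead : (1 : ℝ) ≤ ‖H.leadingCoeff‖ := by
    have hl : H.leadingCoeff = ((h.leadingCoeff : ℤ) : ℂ) := by
      rw [hH, Polynomial.leadingCoeff_map_of_injective hinj]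
      rfl
    rw [hl, Complex.norm_intCast]
    have hne : h.leadingCoeff ≠ 0 := Polynomial.leadingCoeff_ne_zero.mpr hh0
    have := Int.one_le_abs hne
    calc (1 : ℝ) ≤ ((|h.leadingCoeff| : ℤ) : ℝ) := by exact_mod_cast this
    _ = |((h.leadingCoeff : ℤ) : ℝ)| := by push_cast; ring
  have hfinal : (d : ℝ) < ‖H.coeff 0‖ := by
    rw [habs]
    have hdpos : (0 : ℝ) ≤ (d : ℝ) := by positivity
    nlinarith
  have hc : H.coeff 0 = ((h.coeff 0 : ℤ) : ℂ) := by
    rw [hH, Polynomial.coeff_map]; rfl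
  rw [hc, Complex.norm_intCast] at hfinal
  have : ((d : ℤ) : ℝ) < ((|h.coeff 0| : ℤ) : ℝ) := by push_cast; push_cast at hfinal; linarith [abs_nonneg ((h.coeff 0 : ℝ))]
  exact_mod_cast this

private lemma sk_decomp (p : ℕ) (hp : p.Prime) (a : ℤ) (ha : a ≠ 0) (hpa : (p : ℤ) ∣ a) :
    ∃ s u, 1 ≤ s ∧ ¬ (p : ℤ) ∣ u ∧ a = (p : ℤ) ^ s * u := by
  have hfin : FiniteMultiplicity (p : ℤ) a :=
    Int.finiteMultiplicity_iff.mpr ⟨by simpa using hp.ne_one, ha⟩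
  obtain ⟨u, hu, hnd⟩ := hfin.exists_eq_pow_mul_and_not_dvd
  refine ⟨_, u, ?_, hnd, hu⟩
  by_contra hs
  push_neg at hs
  interval_cases h : multiplicity (p : ℤ) a
  · rw [pow_zero, one_mul] at hu
    exact hnd (hu ▸ hpa)

private lemma sk_pow_eq_aux (p : ℕ) (hp : p.Prime) (a b : ℕ) (x y : ℤ)
    (hx : ¬(p : ℤ) ∣ x) (h : (p : ℤ) ^ a * x = (p : ℤ) ^ b * y) (hab : a ≤ b) : a = b := by
  by_contra hne
  have hlt : a < b := lt_of_le_of_ne hab hne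
  have hppos : ((p : ℤ)) ≠ 0 := by exact_mod_cast hp.ne_zero
  have hpow : ((p : ℤ)) ^ a ≠ 0 := pow_ne_zero _ hppos
  have hb : (p : ℤ) ^ b = (p : ℤ) ^ a * (p : ℤ) ^ (b - a) := by
    rw [← pow_add]
    congr 1
    omega
  rw [hb, mul_assoc] at h
  have hx' : x = (p : ℤ) ^ (b - a) * y := mul_left_cancel₀ hpow h
  apply hx
  rw [hx']
  exact Dvd.dvd.mul_right (dvd_pow_self _ (by omega)) _

private lemma sk_pow_eq (p : ℕ) (hp : p.Prime) (a b : ℕ) (x y : ℤ)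
    (hx : ¬(p : ℤ) ∣ x) (hy : ¬(p : ℤ) ∣ y) (h : (p : ℤ) ^ a * x = (p : ℤ) ^ b * y) : a = b := by
  rcases le_total a b with hab | hab
  · exact sk_pow_eq_aux p hp a b x y hx h hab
  · exact (sk_pow_eq_aux p hp b a y x hy h.symm hab).symm

private lemma sk_caseA (p k d : ℕ) (hp : p.Prime) (a b : ℤ)
    (hnd : ¬ (p : ℤ) ∣ b)
    (hab : a * b = (p : ℤ) ^ k * d ∨ a * b = -((p : ℤ) ^ k * d))
    (hbd : (d : ℤ) < |b|) (hd : 0 < d) : False := by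
  have hpz : Prime ((p : ℤ)) := Nat.prime_iff_prime_int.mp hp
  have hbdvd : b ∣ (p : ℤ) ^ k * d := by
    rcases hab with h | h
    · exact ⟨a, by rw [← h]; ring⟩
    · exact ⟨-a, by rw [show b * -a = -(a*b) by ring, h]; ring⟩
  have hcop : IsCoprime b ((p : ℤ) ^ k) :=
    (IsCoprime.pow_left (hpz.coprime_iff_not_dvd.mpr hnd)).symm
  have hbd' : b ∣ (d : ℤ) := hcop.dvd_of_dvd_mul_left hbdvd
  have h1 : |b| ≤ (d : ℤ) := Int.le_of_dvd (by exact_mod_cast hd) ((abs_dvd _ _).mpr hbd')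
  omega

private lemma sk_caseB' (p : ℕ) (hp : p.Prime) (s t : ℕ) (hst : s < t) (u v g1 h1 : ℤ)
    (hu : ¬(p : ℤ) ∣ u) (hh1 : ¬(p : ℤ) ∣ h1)
    (hdvd : (p : ℤ) ^ (s + 1) ∣ (p : ℤ) ^ s * u * h1 + g1 * ((p : ℤ) ^ t * v)) : False := by
  have hpz : Prime ((p : ℤ)) := Nat.prime_iff_prime_int.mp hp
  obtain ⟨e, rfl⟩ : ∃ e, t = s + e + 1 := ⟨t - s - 1, by omega⟩
  have hid : (p : ℤ) ^ s * u * h1 + g1 * ((p : ℤ) ^ (s + e + 1) * v)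
      = (p : ℤ) ^ s * ((p : ℤ) * 0 + (u * h1 + (p : ℤ) ^ (e + 1) * (g1 * v))) := by ring
  rw [hid, pow_succ'] at hdvd
  have hppow : ((p : ℤ)) ^ s ≠ 0 := pow_ne_zero _ (by exact_mod_cast hp.ne_zero)
  rw [show (p:ℤ) * (p:ℤ)^s = (p:ℤ)^s * (p:ℤ) from by ring] at hdvd
  have h2 : (p : ℤ) ∣ (p : ℤ) * 0 + (u * h1 + (p : ℤ) ^ (e + 1) * (g1 * v)) :=
    (mul_dvd_mul_iff_left hppow).mp hdvd
  rw [mul_zero, zero_add] at h2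
  have h3 : (p : ℤ) ∣ (p : ℤ) ^ (e + 1) * (g1 * v) :=
    Dvd.dvd.mul_right (dvd_pow_self _ (Nat.succ_ne_zero e)) _
  have h4 : (p : ℤ) ∣ u * h1 := (dvd_add_right h3).mp (by rwa [add_comm] at h2)
  rcases hpz.dvd_mul.mp h4 with h5 | h5
  · exact hu h5
  · exact hh1 h5

private lemma sk_caseB (p k d : ℕ) (hp : p.Prime) (hkodd : Odd k)
    (g0 g1 h0 h1 : ℤ) (hpg0 : (p : ℤ) ∣ g0) (hph0 : (p : ℤ) ∣ h0)
    (hg0n : g0 ≠ 0) (hh0n : h0 ≠ 0)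
    (hg1 : ¬(p : ℤ) ∣ g1) (hh1 : ¬(p : ℤ) ∣ h1) (hdn : ¬(p : ℤ) ∣ (d : ℤ))
    (hab : g0 * h0 = (p : ℤ) ^ k * d ∨ g0 * h0 = -((p : ℤ) ^ k * d))
    (ha1 : (p : ℤ) ^ k ∣ g0 * h1 + g1 * h0) : False := by
  have hpz : Prime ((p : ℤ)) := Nat.prime_iff_prime_int.mp hp
  obtain ⟨s, u, hs1, hu, rfl⟩ := sk_decomp p hp g0 hg0n hpg0
  obtain ⟨t, v, ht1, hv, rfl⟩ := sk_decomp p hp h0 hh0n hph0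
  have huv : ¬ (p : ℤ) ∣ u * v := by
    intro hdvd
    rcases hpz.dvd_mul.mp hdvd with h | h
    · exact hu h
    · exact hv h
  have hst : s + t = k := by
    rcases hab with h | h
    · exact sk_pow_eq p hp (s + t) k (u * v) (d : ℤ) huv hdn
        (by rw [pow_add]; linear_combination h)
    · exact sk_pow_eq p hp (s + t) k (u * v) (-(d : ℤ)) huv (by simpa using hdn)
        (by rw [pow_add]; linear_combination h)
  have hkodd' : k % 2 = 1 := Nat.odd_iff.mp hkodd
  rcases lt_trichotomy s t with hlt | heq | hgt
  · apply sk_caseB' p hp s t hlt u v g1 h1 hu hh1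
    exact dvd_trans (pow_dvd_pow _ (by omega)) ha1
  · omega
  · apply sk_caseB' p hp t s hgt v u h1 g1 hv hg1
    have : (p : ℤ) ^ t * v * g1 + h1 * ((p : ℤ) ^ s * u)
        = (p : ℤ) ^ s * u * h1 + g1 * ((p : ℤ) ^ t * v) := by ring
    rw [this]
    exact dvd_trans (pow_dvd_pow _ (by omega)) ha1

theorem singh_kumar_j2 (f : Polynomial ℤ) (n : ℕ) (hn : f.natDegree = n) (hdeg : 2 ≤ n)
    (han : f.coeff n ≠ 0) (hprim : f.IsPrimitive)
    (p : ℕ) (hp : p.Prime) (k d : ℕ) (hk : 0 < k) (hkodd : Odd k) (hd : 0 < d)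
    (ha0 : f.coeff 0 = (p : ℤ)^k * d ∨ f.coeff 0 = -((p : ℤ)^k * d))
    (hgcd : Int.gcd (f.coeff 0) (f.coeff 1) = p ^ k)
    (hpd : ¬ (p : ℤ) ∣ f.coeff 2 * d)
    (hzeros : ∀ θ : ℂ, Polynomial.aeval θ f = 0 → (d : ℝ) < ‖θ‖) :
    Irreducible f := by
  have hpz : Prime ((p : ℤ)) := Nat.prime_iff_prime_int.mp hp
  have hf0 : f ≠ 0 := fun h => han (by simp [h])
  have hc0ne : f.coeff 0 ≠ 0 := by
    have hppos : (0 : ℤ) < (p : ℤ) ^ k * d := by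
      have : (0:ℤ) < (p:ℤ) := by exact_mod_cast hp.pos
      positivity
    rcases ha0 with h | h <;> rw [h] <;> omega
  have hpd2 : ¬ (p : ℤ) ∣ f.coeff 2 := fun h => hpd (h.mul_right _)
  have hpdd : ¬ (p : ℤ) ∣ (d : ℤ) := fun h => hpd (h.mul_left _)
  have hpk1 : (p : ℤ) ^ k ∣ f.coeff 1 := by
    have h1 : ((Int.gcd (f.coeff 0) (f.coeff 1) : ℕ) : ℤ) ∣ f.coeff 1 := Int.gcd_dvd_right _ _
    rw [hgcd] at h1
    exact_mod_cast h1
  constructor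
  · apply Polynomial.not_isUnit_of_natDegree_pos
    omega
  · intro g h hgh
    by_contra hcon
    push_neg at hcon
    obtain ⟨hgu, hhu⟩ := hcon
    have hgdeg : 0 < g.natDegree := by
      rcases Nat.eq_zero_or_pos g.natDegree with h0 | h1
      · exfalso
        apply hgu
        rw [Polynomial.eq_C_of_natDegree_eq_zero h0]
        refine Polynomial.isUnit_C.mpr (hprim (g.coeff 0) ⟨h, ?_⟩)
        rw [hgh]
        conv_lhs => rw [Polynomial.eq_C_of_natDegree_eq_zero h0]
      · exact h1
    have hhdeg : 0 < h.natDegree := by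
      rcases Nat.eq_zero_or_pos h.natDegree with h0 | h1
      · exfalso
        apply hhu
        rw [Polynomial.eq_C_of_natDegree_eq_zero h0]
        refine Polynomial.isUnit_C.mpr (hprim (h.coeff 0) ⟨g, ?_⟩)
        rw [hgh]
        conv_lhs => rw [Polynomial.eq_C_of_natDegree_eq_zero h0]
        ring
      · exact h1
    have ha0' : g.coeff 0 * h.coeff 0 = f.coeff 0 := by
      rw [hgh, Polynomial.mul_coeff_zero]
    have ha1' : f.coeff 1 = g.coeff 0 * h.coeff 1 + g.coeff 1 * h.coeff 0 := by
      rw [hgh, Polynomial.coeff_mul, Finset.Nat.sum_antidiagonal_eq_sum_range_succ_mk]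
      simp [Finset.sum_range_succ]
    have ha2' : f.coeff 2 = g.coeff 0 * h.coeff 2 + g.coeff 1 * h.coeff 1
        + g.coeff 2 * h.coeff 0 := by
      rw [hgh, Polynomial.coeff_mul, Finset.Nat.sum_antidiagonal_eq_sum_range_succ_mk]
      simp [Finset.sum_range_succ]
    have hg0ne : g.coeff 0 ≠ 0 := fun h0 => hc0ne (by rw [← ha0', h0, zero_mul])
    have hh0ne : h.coeff 0 ≠ 0 := fun h0 => hc0ne (by rw [← ha0', h0, mul_zero])
    have hgbound : (d : ℤ) < |g.coeff 0| :=
      sk_root_bound f h g (by rw [hgh]; ring) hf0 hgdeg d hd hzeros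
    have hhbound : (d : ℤ) < |h.coeff 0| :=
      sk_root_bound f g h hgh hf0 hhdeg d hd hzeros
    have hab : g.coeff 0 * h.coeff 0 = (p : ℤ) ^ k * d
        ∨ g.coeff 0 * h.coeff 0 = -((p : ℤ) ^ k * d) := by rw [ha0']; exact ha0
    by_cases hph0 : (p : ℤ) ∣ h.coeff 0
    · by_cases hpg0 : (p : ℤ) ∣ g.coeff 0
      · -- case B
        have hg1 : ¬ (p : ℤ) ∣ g.coeff 1 := by
          intro hdvd
          apply hpd2
          rw [ha2']
          exact dvd_add (dvd_add (hpg0.mul_right _) (hdvd.mul_right _)) (hph0.mul_left _)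
        have hh1 : ¬ (p : ℤ) ∣ h.coeff 1 := by
          intro hdvd
          apply hpd2
          rw [ha2']
          exact dvd_add (dvd_add (hpg0.mul_right _) (hdvd.mul_left _)) (hph0.mul_left _)
        exact sk_caseB p k d hp hkodd (g.coeff 0) (g.coeff 1) (h.coeff 0) (h.coeff 1)
          hpg0 hph0 hg0ne hh0ne hg1 hh1 hpdd hab (ha1' ▸ hpk1)
      · -- p ∤ g0 : caseA with b = g0
        refine sk_caseA p k d hp (h.coeff 0) (g.coeff 0) hpg0 ?_ hgbound hd
        rcases hab with h1 | h1
        · exact Or.inl (by rw [← h1]; ring)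
        · exact Or.inr (by rw [← h1]; ring)
    · exact sk_caseA p k d hp (g.coeff 0) (h.coeff 0) hph0 hab hhbound hd
end

section
/- Let f = a_0 + a_1 x + ... + a_n x^n ∈ ℤ[x] with a_0 = ±p^k for some prime p and positive integer k, a_1 = a_2 = ... = a_{q-1} = 0 for some prime q ≤ n, p not dividing a_q · a_n, q not dividing k, and p^k > |a_q| + |a_{q+1}| + ... + |a_n|. Then f is irreducible over ℚ. -/
open Polynomial

open Finset


lemma gauss_key (p : ℕ) [Fact p.Prime] (k q : ℕ) (hq : 0 < q) (g h : Polynomial ℤ)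
    (hg : g ≠ 0) (hh : h ≠ 0) :
    ∃ i ∈ g.support, ∃ j ∈ h.support,
      (∀ i' ∈ g.support, q * padicValInt p (g.coeff i) + k * i
          ≤ q * padicValInt p (g.coeff i') + k * i') ∧
      (∀ j' ∈ h.support, q * padicValInt p (h.coeff j) + k * j
          ≤ q * padicValInt p (h.coeff j') + k * j') ∧
      (g * h).coeff (i + j) ≠ 0 ∧
      q * padicValInt p ((g * h).coeff (i + j)) + k * (i + j)
        = (q * padicValInt p (g.coeff i) + k * i) + (q * padicValInt p (h.coeff j) + k * j) := by
  classical
  set valg : ℕ → ℕ := fun i => q * padicValInt p (g.coeff i) + k * i with hvalg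
  set valh : ℕ → ℕ := fun j => q * padicValInt p (h.coeff j) + k * j with hvalh
  have hgS : g.support.Nonempty := nonempty_support_iff.mpr hg
  have hhS : h.support.Nonempty := nonempty_support_iff.mpr hh
  -- minimum values
  obtain ⟨Wg, hWg_mem, hWg_min⟩ : ∃ W, (∃ i ∈ g.support, valg i = W) ∧
      ∀ i' ∈ g.support, W ≤ valg i' := by
    refine ⟨(g.support.image valg).min' (hgS.image _), ?_, ?_⟩
    · obtain ⟨i, hi, hieq⟩ := Finset.mem_image.mp ((g.support.image valg).min'_mem (hgS.image _))
      exact ⟨i, hi, hieq⟩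
    · intro i' hi'
      exact Finset.min'_le _ _ (Finset.mem_image_of_mem _ hi')
  obtain ⟨Wh, hWh_mem, hWh_min⟩ : ∃ W, (∃ j ∈ h.support, valh j = W) ∧
      ∀ j' ∈ h.support, W ≤ valh j' := by
    refine ⟨(h.support.image valh).min' (hhS.image _), ?_, ?_⟩
    · obtain ⟨j, hj, hjeq⟩ := Finset.mem_image.mp ((h.support.image valh).min'_mem (hhS.image _))
      exact ⟨j, hj, hjeq⟩
    · intro j' hj'
      exact Finset.min'_le _ _ (Finset.mem_image_of_mem _ hj')
  -- maximal minimizers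
  have hMg : (g.support.filter (fun i => valg i = Wg)).Nonempty := by
    obtain ⟨i, hi, hieq⟩ := hWg_mem; exact ⟨i, Finset.mem_filter.mpr ⟨hi, hieq⟩⟩
  have hMh : (h.support.filter (fun j => valh j = Wh)).Nonempty := by
    obtain ⟨j, hj, hjeq⟩ := hWh_mem; exact ⟨j, Finset.mem_filter.mpr ⟨hj, hjeq⟩⟩
  set i := (g.support.filter (fun i => valg i = Wg)).max' hMg with hi_def
  set j := (h.support.filter (fun j => valh j = Wh)).max' hMh with hj_def
  have hiS : i ∈ g.support ∧ valg i = Wg := by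
    have := (g.support.filter (fun i => valg i = Wg)).max'_mem hMg
    exact Finset.mem_filter.mp this
  have hjS : j ∈ h.support ∧ valh j = Wh := by
    have := (h.support.filter (fun j => valh j = Wh)).max'_mem hMh
    exact Finset.mem_filter.mp this
  have hig_strict : ∀ i' ∈ g.support, i < i' → Wg < valg i' := by
    intro i' hi' hlt
    rcases lt_or_eq_of_le (hWg_min i' hi') with h' | h'
    · exact h'
    · exfalso
      have : i' ∈ g.support.filter (fun i => valg i = Wg) :=
        Finset.mem_filter.mpr ⟨hi', h'.symm⟩
      exact absurd (Finset.le_max' _ _ this) (not_le.mpr hlt)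
  have hjh_strict : ∀ j' ∈ h.support, j < j' → Wh < valh j' := by
    intro j' hj' hlt
    rcases lt_or_eq_of_le (hWh_min j' hj') with h' | h'
    · exact h'
    · exfalso
      have : j' ∈ h.support.filter (fun j => valh j = Wh) :=
        Finset.mem_filter.mpr ⟨hj', h'.symm⟩
      exact absurd (Finset.le_max' _ _ this) (not_le.mpr hlt)
  refine ⟨i, hiS.1, j, hjS.1, ?_, ?_, ?_⟩
  · intro i' hi'
    have h1 := hWg_min i' hi'
    rw [← hiS.2] at h1
    simpa only [hvalg] using h1
  · intro j' hj'
    have h1 := hWh_min j' hj'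
    rw [← hjS.2] at h1
    simpa only [hvalh] using h1
  -- the product coefficient
  set V := padicValInt p (g.coeff i) + padicValInt p (h.coeff j) with hV
  have hgi0 : g.coeff i ≠ 0 := mem_support_iff.mp hiS.1
  have hhj0 : h.coeff j ≠ 0 := mem_support_iff.mp hjS.1
  have main_ne : g.coeff i * h.coeff j ≠ 0 := mul_ne_zero hgi0 hhj0
  have hmainv : padicValInt p (g.coeff i * h.coeff j) = V := padicValInt.mul hgi0 hhj0
  have hmain_dvd : ((p : ℤ))^V ∣ g.coeff i * h.coeff j := by
    rw [← hmainv]; exact padicValInt_dvd _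
  have hmain_ndvd : ¬ ((p : ℤ))^(V+1) ∣ g.coeff i * h.coeff j := by
    rw [padicValInt_dvd_iff, hmainv]
    push_neg
    exact ⟨main_ne, by omega⟩
  have hrest : ∀ x ∈ (antidiagonal (i+j)).erase (i,j),
      ((p : ℤ))^(V+1) ∣ g.coeff x.1 * h.coeff x.2 := by
    rintro ⟨i', j'⟩ hx
    obtain ⟨hne, hsum⟩ := Finset.mem_erase.mp hx
    rw [Finset.HasAntidiagonal.mem_antidiagonal] at hsum
    by_cases hgi' : g.coeff i' = 0
    · simp [hgi']
    by_cases hhj' : h.coeff j' = 0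
    · simp [hhj']
    have hi'S : i' ∈ g.support := mem_support_iff.mpr hgi'
    have hj'S : j' ∈ h.support := mem_support_iff.mpr hhj'
    have hVlt : V + 1 ≤ padicValInt p (g.coeff i') + padicValInt p (h.coeff j') := by
      have hsum' : k * i' + k * j' = k * i + k * j := by
        rw [← Nat.mul_add, ← Nat.mul_add, hsum]
      have hne' : i' ≠ i := by
        intro hii; apply hne; simp only [Prod.mk.injEq]; omega
      have hqmul : q * padicValInt p (g.coeff i) + q * padicValInt p (h.coeff j)
          < q * padicValInt p (g.coeff i') + q * padicValInt p (h.coeff j') := by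
        rcases lt_or_gt_of_ne hne' with hlt | hgt
        · have hj'gt : j < j' := by omega
          have h1 := hWg_min i' hi'S
          rw [← hiS.2] at h1
          have h2 := hjh_strict j' hj'S hj'gt
          rw [← hjS.2] at h2
          simp only [hvalg] at h1
          simp only [hvalh] at h2
          omega
        · have h1 := hig_strict i' hi'S hgt
          rw [← hiS.2] at h1
          have h2 := hWh_min j' hj'S
          rw [← hjS.2] at h2
          simp only [hvalg] at h1
          simp only [hvalh] at h2
          omega
      have hlt2 : padicValInt p (g.coeff i) + padicValInt p (h.coeff j)
          < padicValInt p (g.coeff i') + padicValInt p (h.coeff j') := by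
        apply Nat.lt_of_mul_lt_mul_left (a := q)
        rw [Nat.mul_add, Nat.mul_add]
        exact hqmul
      rw [hV]; omega
    calc ((p : ℤ))^(V+1) ∣ (p : ℤ)^(padicValInt p (g.coeff i') + padicValInt p (h.coeff j')) :=
          pow_dvd_pow _ hVlt
      _ ∣ g.coeff i' * h.coeff j' := by
          rw [pow_add]
          exact mul_dvd_mul (padicValInt_dvd _) (padicValInt_dvd _)
  have hcoeff : (g * h).coeff (i + j)
      = g.coeff i * h.coeff j + ∑ x ∈ (antidiagonal (i+j)).erase (i,j),
          g.coeff x.1 * h.coeff x.2 := by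
    rw [coeff_mul]
    exact (Finset.add_sum_erase _ (fun x => g.coeff x.1 * h.coeff x.2) (a := (i, j)) (Finset.HasAntidiagonal.mem_antidiagonal.mpr rfl)).symm
  have hrest_dvd : ((p : ℤ))^(V+1) ∣ ∑ x ∈ (antidiagonal (i+j)).erase (i,j),
      g.coeff x.1 * h.coeff x.2 := Finset.dvd_sum hrest
  have hne0 : (g * h).coeff (i + j) ≠ 0 := by
    intro h0
    apply hmain_ndvd
    have : g.coeff i * h.coeff j = - ∑ x ∈ (antidiagonal (i+j)).erase (i,j),
        g.coeff x.1 * h.coeff x.2 := by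
      rw [hcoeff] at h0; linarith
    rw [this]
    exact dvd_neg.mpr hrest_dvd
  have hdvdV : ((p : ℤ))^V ∣ (g * h).coeff (i + j) := by
    rw [hcoeff]
    exact dvd_add hmain_dvd (dvd_trans (pow_dvd_pow _ (by omega)) hrest_dvd)
  have hndvdV1 : ¬ ((p : ℤ))^(V+1) ∣ (g * h).coeff (i + j) := by
    intro hd
    apply hmain_ndvd
    have : g.coeff i * h.coeff j = (g * h).coeff (i + j)
        - ∑ x ∈ (antidiagonal (i+j)).erase (i,j), g.coeff x.1 * h.coeff x.2 := by
      rw [hcoeff]; ring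
    rw [this]
    exact dvd_sub hd hrest_dvd
  have hpv : padicValInt p ((g * h).coeff (i + j)) = V := by
    have h1 := (padicValInt_dvd_iff V ((g * h).coeff (i + j))).mp hdvdV
    have h2 : ¬ (V + 1 ≤ padicValInt p ((g * h).coeff (i + j))) := by
      intro hle
      exact hndvdV1 ((padicValInt_dvd_iff _ _).mpr (Or.inr hle))
    omega
  refine ⟨hne0, ?_⟩
  rw [hpv, hV]; ring

open Polynomial Finset

lemma roots_big (f : Polynomial ℤ) (n : ℕ) (hn : f.natDegree = n)
    (q : ℕ) (hq1 : 1 ≤ q)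
    (hzero : ∀ i, 1 ≤ i → i ≤ q - 1 → f.coeff i = 0)
    (hbig : |f.coeff 0| > ∑ i ∈ Finset.Icc q n, |f.coeff i|)
    (z : ℂ) (hz : (f.map (Int.castRingHom ℂ)).eval z = 0) : 1 < ‖z‖ := by
  by_contra hle
  push_neg at hle
  rw [eval_map, eval₂_eq_sum_range, hn] at hz
  have hsplit := Finset.add_sum_erase (Finset.range (n+1))
    (fun i => ((Int.castRingHom ℂ) (f.coeff i)) * z ^ i) (a := 0)
    (Finset.mem_range.mpr (by omega))
  have h0 : ((Int.castRingHom ℂ) (f.coeff 0)) * z ^ 0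
      = - ∑ i ∈ (Finset.range (n+1)).erase 0,
          ((Int.castRingHom ℂ) (f.coeff i)) * z ^ i :=
    eq_neg_of_add_eq_zero_left (hsplit.trans hz)
  have hIcc : ∑ i ∈ (Finset.range (n+1)).erase 0, ((Int.castRingHom ℂ) (f.coeff i)) * z ^ i
      = ∑ i ∈ Finset.Icc q n, ((Int.castRingHom ℂ) (f.coeff i)) * z ^ i := by
    refine (Finset.sum_subset ?_ ?_).symm
    · intro x hx
      rw [Finset.mem_Icc] at hx
      rw [Finset.mem_erase, Finset.mem_range]
      omega
    · intro x hx hnx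
      rw [Finset.mem_erase, Finset.mem_range] at hx
      rw [Finset.mem_Icc] at hnx
      have : f.coeff x = 0 := hzero x (by omega) (by omega)
      simp [this]
  rw [hIcc] at h0
  have habs : ‖((Int.castRingHom ℂ) (f.coeff 0) * z ^ 0)‖
      ≤ ∑ i ∈ Finset.Icc q n, (|f.coeff i| : ℝ) := by
    rw [h0, norm_neg]
    refine le_trans (norm_sum_le _ _) (Finset.sum_le_sum ?_)
    intro i _
    rw [norm_mul, norm_pow]
    have h1 : ‖((Int.castRingHom ℂ) (f.coeff i))‖ = (|f.coeff i| : ℝ) := by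
      simp [Complex.norm_intCast, Int.cast_abs]
    rw [h1]
    have h2 : ‖z‖ ^ i ≤ 1 := pow_le_one₀ (norm_nonneg z) hle
    nlinarith [abs_nonneg ((f.coeff i : ℝ))]
  have hL : ‖((Int.castRingHom ℂ) (f.coeff 0) * z ^ 0)‖ = (|f.coeff 0| : ℝ) := by
    simp [Complex.norm_intCast, Int.cast_abs]
  rw [hL] at habs
  have : (|f.coeff 0| : ℝ) ≤ ((∑ i ∈ Finset.Icc q n, |f.coeff i| : ℤ) : ℝ) := by
    push_cast
    exact habs
  have hfin : |f.coeff 0| ≤ ∑ i ∈ Finset.Icc q n, |f.coeff i| := by exact_mod_cast this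
  omega

lemma coeff_zero_big (f g : Polynomial ℤ)
    (hroot : ∀ z : ℂ, (f.map (Int.castRingHom ℂ)).eval z = 0 → 1 < ‖z‖)
    (hdvd : g ∣ f) (hgd : 1 ≤ g.natDegree) (hg0 : g ≠ 0) : 1 < |g.coeff 0| := by
  set G := g.map (Int.castRingHom ℂ) with hG
  have hGne : G ≠ 0 := (Polynomial.map_ne_zero_iff (Int.cast_injective)).mpr hg0
  have hGdeg : G.natDegree = g.natDegree := natDegree_map_eq_of_injective Int.cast_injective g
  have hsplits : G.Splits := IsAlgClosed.splits G
  have hcard : G.roots.card = G.natDegree := (splits_iff_card_roots.mp hsplits)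
  have hroots_ne : G.roots ≠ 0 := by
    intro h0
    rw [h0] at hcard
    simp at hcard
    omega
  have hprod := hsplits.eq_prod_roots
  -- evaluate at 0
  have heval : G.coeff 0 = G.leadingCoeff * (G.roots.map (fun a => -a)).prod := by
    rw [coeff_zero_eq_eval_zero]
    conv_lhs => rw [hprod]
    rw [eval_mul, eval_C, eval_multiset_prod, Multiset.map_map]
    congr 1
    congr 1
    apply Multiset.map_congr rfl
    intro a _
    simp
  -- each root has abs > 1
  have hroot_abs : ∀ a ∈ G.roots, 1 < ‖a‖ := by
    intro a ha
    apply hroot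
    have hGF : G ∣ f.map (Int.castRingHom ℂ) := Polynomial.map_dvd _ hdvd
    obtain ⟨K, hK⟩ := hGF
    rw [hK, eval_mul, (isRoot_of_mem_roots ha : G.eval a = 0), zero_mul]
  -- product bound
  obtain ⟨α, hα⟩ := Multiset.exists_mem_of_ne_zero hroots_ne
  obtain ⟨rest, hrest⟩ := Multiset.exists_cons_of_mem hα
  have habs_prod : 1 < ‖(G.leadingCoeff * (G.roots.map (fun a => -a)).prod)‖ := by
    rw [norm_mul]
    have h1 : 1 ≤ ‖G.leadingCoeff‖ := by
      have : G.leadingCoeff = ((g.leadingCoeff : ℤ) : ℂ) := by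
        rw [hG, leadingCoeff_map_of_leadingCoeff_ne_zero]
        · rfl
        · simpa using leadingCoeff_ne_zero.mpr hg0
      rw [this, Complex.norm_intCast]
      exact_mod_cast Int.one_le_abs (leadingCoeff_ne_zero.mpr hg0)
    have h2 : 1 < ‖((G.roots.map (fun a => -a)).prod)‖ := by
      rw [show ‖(G.roots.map (fun a => -a)).prod‖ = ((G.roots.map (fun a => -a)).map (fun x => ‖x‖)).prod from map_multiset_prod (normHom : ℂ →*₀ ℝ) _, Multiset.map_map]
      simp only [Function.comp_def]
      rw [hrest, Multiset.map_cons, Multiset.prod_cons]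
      have hα1 : 1 < ‖(-α)‖ := by
        rw [norm_neg]; exact hroot_abs α hα
      have hrest1 : 1 ≤ (rest.map (fun a => ‖(-a)‖)).prod := by
        apply Multiset.one_le_prod
        intro x hx
        obtain ⟨a, ha, rfl⟩ := Multiset.mem_map.mp hx
        rw [norm_neg]
        refine le_of_lt (hroot_abs a ?_)
        rw [hrest]
        exact Multiset.mem_cons_of_mem ha
      calc (1:ℝ) < ‖(-α)‖ * 1 := by linarith
        _ ≤ ‖(-α)‖ * (rest.map (fun a => ‖(-a)‖)).prod := by
            apply mul_le_mul_of_nonneg_left hrest1 (le_of_lt (by linarith))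
    calc (1:ℝ) = 1 * 1 := by ring
      _ < ‖G.leadingCoeff‖ * ‖((G.roots.map (fun a => -a)).prod)‖ := by
          apply mul_lt_mul' h1 h2 (by norm_num) (by linarith)
  rw [← heval] at habs_prod
  have hc : G.coeff 0 = ((g.coeff 0 : ℤ) : ℂ) := by rw [hG, coeff_map]; rfl
  rw [hc, Complex.norm_intCast] at habs_prod
  have : (1:ℝ) < ((|g.coeff 0| : ℤ) : ℝ) := by
    rw [Int.cast_abs]; exact habs_prod
  exact_mod_cast this

lemma pv_eq_k (p : ℕ) [Fact p.Prime] (k : ℕ) (x : ℤ)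
    (hx : x = (p:ℤ)^k ∨ x = -((p:ℤ)^k)) : padicValInt p x = k := by
  have : x.natAbs = p ^ k := by
    rcases hx with h | h <;> rw [h] <;>
      simp [Int.natAbs_pow]
  rw [padicValInt, this, padicValNat.prime_pow]

lemma pv_zero_of_not_dvd (p : ℕ) [Fact p.Prime] (x : ℤ)
    (hx : ¬ (p:ℤ) ∣ x) : padicValInt p x = 0 := by
  by_contra hne
  apply hx
  have h1 : 1 ≤ padicValInt p x := by omega
  calc (p:ℤ) = (p:ℤ)^1 := (pow_one _).symm
    _ ∣ (p:ℤ)^(padicValInt p x) := pow_dvd_pow _ h1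
    _ ∣ x := padicValInt_dvd _


theorem koley_reddy (f : Polynomial ℤ) (n : ℕ) (hn : f.natDegree = n)
    (p : ℕ) (hp : p.Prime) (k : ℕ) (hk : 0 < k)
    (ha0 : f.coeff 0 = (p : ℤ)^k ∨ f.coeff 0 = -((p : ℤ)^k))
    (q : ℕ) (hq : q.Prime) (hqn : q ≤ n)
    (hzero : ∀ i, 1 ≤ i → i ≤ q - 1 → f.coeff i = 0)
    (haq : f.coeff q ≠ 0) (han : f.coeff n ≠ 0)
    (hpd : ¬ (p : ℤ) ∣ f.coeff q * f.coeff n)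
    (hqk : ¬ q ∣ k)
    (hbig : ((p : ℤ)^k : ℤ) > ∑ i ∈ Finset.Icc q n, |f.coeff i|) :
    Irreducible (f.map (Int.castRingHom ℚ)) := by
  haveI : Fact p.Prime := ⟨hp⟩
  have hq2 : 2 ≤ q := hq.two_le
  have hqpos : 0 < q := by omega
  have hpq : ¬ (p:ℤ) ∣ f.coeff q := fun hd => hpd (hd.mul_right _)
  have hpn : ¬ (p:ℤ) ∣ f.coeff n := fun hd => hpd (hd.mul_left _)
  have hfne : f ≠ 0 := fun h0 => haq (by simp [h0])
  have hpInt : Prime ((p:ℤ)) := Nat.prime_iff_prime_int.mp hp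
  have habs0 : |f.coeff 0| = (p:ℤ)^k := by
    rcases ha0 with h | h <;> rw [h]
    · exact abs_of_nonneg (by positivity)
    · rw [abs_neg]; exact abs_of_nonneg (by positivity)
  have hf0ne : f.coeff 0 ≠ 0 := by
    intro h0
    rw [h0, abs_zero] at habs0
    have : (0:ℤ) < (p:ℤ)^k := pow_pos (by exact_mod_cast hp.pos) k
    omega
  -- primitivity
  have hprim : f.IsPrimitive := by
    intro r hr
    rw [Polynomial.C_dvd_iff_dvd_coeff] at hr
    by_contra hu
    have hrne : r ≠ 0 := by
      intro h0; exact haq (by simpa [h0] using hr q)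
    have hrnatAbs : r.natAbs ≠ 1 := fun h1 => hu (Int.isUnit_iff_natAbs_eq.mpr h1)
    obtain ⟨ℓ, hℓ, hℓr⟩ := Int.exists_prime_and_dvd hrnatAbs
    have hℓ0 : ℓ ∣ f.coeff 0 := hℓr.trans (hr 0)
    have hℓpk : ℓ ∣ (p:ℤ)^k := by
      rcases ha0 with h | h
      · rwa [h] at hℓ0
      · rw [h] at hℓ0; exact (dvd_neg.mp hℓ0)
    have hℓp : ℓ ∣ (p:ℤ) := hℓ.dvd_of_dvd_pow hℓpk
    have hassoc : Associated ℓ ((p:ℤ)) :=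
      Irreducible.associated_of_dvd hℓ.irreducible hpInt.irreducible hℓp
    exact hpq (hassoc.symm.dvd.trans (hℓr.trans (hr q)))
  rw [← IsPrimitive.Int.irreducible_iff_irreducible_map_cast hprim]
  constructor
  · intro hu
    have := Polynomial.natDegree_eq_zero_of_isUnit hu
    omega
  intro g h hf
  by_contra hgoal
  push_neg at hgoal
  obtain ⟨hug, huh⟩ := hgoal
  have hg0 : g ≠ 0 := by rintro rfl; rw [zero_mul] at hf; exact hfne hf
  have hh0 : h ≠ 0 := by rintro rfl; rw [mul_zero] at hf; exact hfne hf
  have hd1g : 1 ≤ g.natDegree := by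
    by_contra hd
    push_neg at hd
    have hdeq : g.natDegree = 0 := by omega
    have hgC : g = C (g.coeff 0) := eq_C_of_natDegree_eq_zero hdeq
    have : IsUnit (g.coeff 0) := hprim (g.coeff 0) ⟨h, by rw [hf, ← hgC]⟩
    exact hug (hgC ▸ isUnit_C.mpr this)
  have hd1h : 1 ≤ h.natDegree := by
    by_contra hd
    push_neg at hd
    have hdeq : h.natDegree = 0 := by omega
    have hhC : h = C (h.coeff 0) := eq_C_of_natDegree_eq_zero hdeq
    have : IsUnit (h.coeff 0) := hprim (h.coeff 0) ⟨g, by rw [hf, ← hhC]; ring⟩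
    exact huh (hhC ▸ isUnit_C.mpr this)
  -- roots of f over ℂ all have abs > 1
  have hroot : ∀ z : ℂ, (f.map (Int.castRingHom ℂ)).eval z = 0 → 1 < ‖z‖ := by
    intro z hz
    exact roots_big f n hn q (by omega) hzero (by rw [habs0]; exact hbig) z hz
  have hgbig : 1 < |g.coeff 0| := coeff_zero_big f g hroot ⟨h, hf⟩ hd1g hg0
  have hhbig : 1 < |h.coeff 0| := coeff_zero_big f h hroot ⟨g, by rw [hf]; ring⟩ hd1h hh0
  have hg00 : g.coeff 0 ≠ 0 := by intro h0; rw [h0] at hgbig; simp at hgbig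
  have hh00 : h.coeff 0 ≠ 0 := by intro h0; rw [h0] at hhbig; simp at hhbig
  have hc0 : g.coeff 0 * h.coeff 0 = f.coeff 0 := by rw [hf, mul_coeff_zero]
  set s := padicValInt p (g.coeff 0) with hs_def
  set t := padicValInt p (h.coeff 0) with ht_def
  have hst : s + t = k := by
    rw [hs_def, ht_def, ← padicValInt.mul hg00 hh00, hc0, pv_eq_k p k _ ha0]
  -- p divides g.coeff 0 and h.coeff 0
  have hpg0 : (p:ℤ) ∣ g.coeff 0 := by
    have hdvd : (g.coeff 0).natAbs ∣ p ^ k := by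
      have : (g.coeff 0).natAbs ∣ (f.coeff 0).natAbs :=
        Int.natAbs_dvd_natAbs.mpr ⟨h.coeff 0, hc0.symm⟩
      have habsn : (f.coeff 0).natAbs = p ^ k := by
        have := habs0
        rw [Int.abs_eq_natAbs] at this
        exact_mod_cast this
      rwa [habsn] at this
    obtain ⟨j, hjk, hjeq⟩ := (Nat.dvd_prime_pow hp).mp hdvd
    have hj1 : 1 ≤ j := by
      by_contra hj0
      push_neg at hj0
      interval_cases j
      simp at hjeq
      rw [Int.abs_eq_natAbs, hjeq] at hgbig
      simp at hgbig
    have : p ∣ (g.coeff 0).natAbs := by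
      rw [hjeq]; exact dvd_pow_self p (by omega)
    exact Int.dvd_natAbs.mp (Int.natCast_dvd_natCast.mpr this)
  have hph0 : (p:ℤ) ∣ h.coeff 0 := by
    have hdvd : (h.coeff 0).natAbs ∣ p ^ k := by
      have : (h.coeff 0).natAbs ∣ (f.coeff 0).natAbs :=
        Int.natAbs_dvd_natAbs.mpr ⟨g.coeff 0, by rw [← hc0]; ring⟩
      have habsn : (f.coeff 0).natAbs = p ^ k := by
        have := habs0
        rw [Int.abs_eq_natAbs] at this
        exact_mod_cast this
      rwa [habsn] at this
    obtain ⟨j, hjk, hjeq⟩ := (Nat.dvd_prime_pow hp).mp hdvd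
    have hj1 : 1 ≤ j := by
      by_contra hj0
      push_neg at hj0
      interval_cases j
      simp at hjeq
      rw [Int.abs_eq_natAbs, hjeq] at hhbig
      simp at hhbig
    have : p ∣ (h.coeff 0).natAbs := by
      rw [hjeq]; exact dvd_pow_self p (by omega)
    exact Int.dvd_natAbs.mp (Int.natCast_dvd_natCast.mpr this)
  -- leading coefficients not divisible by p
  have hlead : f.coeff n = g.leadingCoeff * h.leadingCoeff := by
    rw [← hn, ← leadingCoeff_mul, ← hf]
    rfl
  have hpglead : ¬ (p:ℤ) ∣ g.leadingCoeff := by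
    intro hd; exact hpn (hlead ▸ hd.mul_right _)
  have hphlead : ¬ (p:ℤ) ∣ h.leadingCoeff := by
    intro hd; exact hpn (hlead ▸ hd.mul_left _)
  -- least index not divisible by p
  have hexg : ∃ i, ¬ (p:ℤ) ∣ g.coeff i := ⟨g.natDegree, by rwa [coeff_natDegree]⟩
  have hexh : ∃ i, ¬ (p:ℤ) ∣ h.coeff i := ⟨h.natDegree, by rwa [coeff_natDegree]⟩
  set a := Nat.find hexg with ha_def
  set b := Nat.find hexh with hb_def
  have ha_not : ¬ (p:ℤ) ∣ g.coeff a := Nat.find_spec hexg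
  have hb_not : ¬ (p:ℤ) ∣ h.coeff b := Nat.find_spec hexh
  have ha_min : ∀ i, i < a → (p:ℤ) ∣ g.coeff i := fun i hi =>
    not_not.mp (Nat.find_min hexg hi)
  have hb_min : ∀ i, i < b → (p:ℤ) ∣ h.coeff i := fun i hi =>
    not_not.mp (Nat.find_min hexh hi)
  have ha1 : 1 ≤ a := by
    by_contra h0
    push_neg at h0
    interval_cases a
    exact ha_not hpg0
  have hb1 : 1 ≤ b := by
    by_contra h0
    push_neg at h0
    interval_cases b
    exact hb_not hph0
  -- a + b = q
  have hab : a + b = q := by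
    have hnd : ¬ (p:ℤ) ∣ f.coeff (a + b) := by
      intro hdvd
      rw [hf, coeff_mul,
        ← Finset.add_sum_erase _ (fun x => g.coeff x.1 * h.coeff x.2) (a := (a, b))
          (Finset.HasAntidiagonal.mem_antidiagonal.mpr rfl)] at hdvd
      have hrest : (p:ℤ) ∣ ∑ x ∈ (antidiagonal (a+b)).erase (a,b),
          g.coeff x.1 * h.coeff x.2 := by
        apply Finset.dvd_sum
        rintro ⟨i', j'⟩ hx
        obtain ⟨hne, hsum⟩ := Finset.mem_erase.mp hx
        rw [Finset.HasAntidiagonal.mem_antidiagonal] at hsum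
        have hne' : i' ≠ a := by intro hia; apply hne; simp only [Prod.mk.injEq]; omega
        rcases lt_or_gt_of_ne hne' with hlt | hgt
        · exact (ha_min i' hlt).mul_right _
        · exact ((hb_min j' (by omega)).mul_left _)
      have hmain : (p:ℤ) ∣ g.coeff a * h.coeff b := by
        have := dvd_sub hdvd hrest
        simpa using this
      rcases hpInt.dvd_mul.mp hmain with hd | hd
      · exact ha_not hd
      · exact hb_not hd
    have hdvd_low : ∀ m, m < a + b → (p:ℤ) ∣ f.coeff m := by
      intro m hm
      rw [hf, coeff_mul]
      apply Finset.dvd_sum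
      rintro ⟨i', j'⟩ hx
      rw [Finset.HasAntidiagonal.mem_antidiagonal] at hx
      by_cases hia : i' < a
      · exact (ha_min i' hia).mul_right _
      · exact ((hb_min j' (by omega)).mul_left _)
    have h1 : a + b ≤ q := by
      by_contra hc
      push_neg at hc
      exact hpq (hdvd_low q hc)
    have h2 : q ≤ a + b := by
      by_contra hc
      push_neg at hc
      have hab1 : 1 ≤ a + b := by omega
      have : f.coeff (a+b) = 0 := hzero (a+b) hab1 (by omega)
      exact hnd (this ▸ dvd_zero _)
    omega
  -- the Gauss valuation argument
  obtain ⟨i, hiS, j, hjS, hming, hminh, hne0, heqv⟩ :=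
    gauss_key p k q hqpos g h hg0 hh0
  rw [← hf] at hne0 heqv
  -- lower bound on f side
  have hflow : ∀ m, f.coeff m ≠ 0 → k * q ≤ q * padicValInt p (f.coeff m) + k * m := by
    intro m hm
    rcases Nat.lt_or_ge m q with hmq | hmq
    · rcases Nat.eq_zero_or_pos m with hm0 | hmpos
      · subst hm0
        rw [pv_eq_k p k _ ha0, Nat.mul_zero, Nat.add_zero, Nat.mul_comm]
      · exact absurd (hzero m (by omega) (by omega)) hm
    · have h1 : k * q ≤ k * m := Nat.mul_le_mul_left k hmq
      omega
  have hlow : k * q ≤ q * padicValInt p (f.coeff (i + j)) + k * (i + j) :=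
    hflow (i + j) hne0
  -- upper bounds
  have h0g : (0:ℕ) ∈ g.support := mem_support_iff.mpr hg00
  have h0h : (0:ℕ) ∈ h.support := mem_support_iff.mpr hh00
  have haS : a ∈ g.support := mem_support_iff.mpr (fun h0 => ha_not (h0 ▸ dvd_zero _))
  have hbS : b ∈ h.support := mem_support_iff.mpr (fun h0 => hb_not (h0 ▸ dvd_zero _))
  have hub1g : q * padicValInt p (g.coeff i) + k * i ≤ q * s := by
    have := hming 0 h0g
    simpa using this
  have hub1h : q * padicValInt p (h.coeff j) + k * j ≤ q * t := by
    have := hminh 0 h0h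
    simpa using this
  have hub2g : q * padicValInt p (g.coeff i) + k * i ≤ k * a := by
    have := hming a haS
    rwa [pv_zero_of_not_dvd p _ ha_not, Nat.mul_zero, Nat.zero_add] at this
  have hub2h : q * padicValInt p (h.coeff j) + k * j ≤ k * b := by
    have := hminh b hbS
    rwa [pv_zero_of_not_dvd p _ hb_not, Nat.mul_zero, Nat.zero_add] at this
  have hsum1 : q * s + q * t = k * q := by
    rw [← Nat.mul_add, hst, Nat.mul_comm]
  have hsum2 : k * a + k * b = k * q := by
    rw [← Nat.mul_add, hab]
  have hkij : k * (i + j) = k * i + k * j := Nat.mul_add k i j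
  rw [hkij] at hlow heqv
  have hXa : q * padicValInt p (g.coeff i) + k * i = k * a := by omega
  have hXs : q * padicValInt p (g.coeff i) + k * i = q * s := by omega
  have hqa : q ∣ k * a := by
    rw [← hXa, hXs]
    exact Dvd.intro s rfl
  rcases (Nat.Prime.dvd_mul hq).mp hqa with hd | hd
  · exact hqk hd
  · have : q ≤ a := Nat.le_of_dvd (by omega) hd
    omega
end

section
/- Let f = a_0 + a_1 x + ... + a_{n-1} x^{n-1} + x^n ∈ ℤ[x] be monic of degree n ≥ 2 with a_0 ≠ 0. If |a_{n-1}| > 1 + |a_{n-2}| + ... + |a_1| + |a_0|, then f is irreducible over ℚ. -/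
open Polynomial Finset Complex ComplexConjugate

namespace PerronAux

/-- Telescoping key lemma for the Landau-style norm identity. -/
lemma key (z : ℂ) (h : ℂ[X]) : ∀ M : ℕ,
    ∑ i ∈ Finset.range (M + 1), Complex.normSq (((X - C z) * h).coeff i)
      = (∑ i ∈ Finset.range (M + 1),
          Complex.normSq (((C (conj z) * X - 1) * h).coeff i))
        + (Complex.normSq z - 1) * Complex.normSq (h.coeff M) := by
  intro M
  induction M with
  | zero =>
    have hc : ((X - C z) * h).coeff 0 = -(z * h.coeff 0) := by
      rw [Polynomial.mul_coeff_zero, coeff_sub, coeff_X_zero, coeff_C_zero]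
      ring
    have hd : ((C (conj z) * X - 1) * h).coeff 0 = -(h.coeff 0) := by
      rw [Polynomial.mul_coeff_zero, coeff_sub]
      simp
    rw [Finset.range_one, Finset.sum_singleton, Finset.sum_singleton, hc, hd,
      Complex.normSq_neg, Complex.normSq_neg, Complex.normSq_mul]
    ring
  | succ M ih =>
    have hc : ((X - C z) * h).coeff (M + 1) = h.coeff M - z * h.coeff (M + 1) := by
      rw [sub_mul, coeff_sub, coeff_X_mul, coeff_C_mul]
    have hd : ((C (conj z) * X - 1) * h).coeff (M + 1)
        = conj z * h.coeff M - h.coeff (M + 1) := by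
      have he : (C (conj z) * X - 1) * h = C (conj z) * (X * h) - h := by ring
      rw [he, coeff_sub, coeff_C_mul, coeff_X_mul]
    have hre : (h.coeff M * conj (z * h.coeff (M + 1))).re
        = (conj z * h.coeff M * conj (h.coeff (M + 1))).re := by
      congr 1
      rw [map_mul]
      ring
    rw [Finset.sum_range_succ]
    conv_rhs => rw [Finset.sum_range_succ]
    rw [ih, hc, hd,
      Complex.normSq_sub, Complex.normSq_sub, Complex.normSq_mul, Complex.normSq_mul,
      Complex.normSq_conj, hre]
    ring

/-- Two-root Landau inequality: if a monic polynomial factors as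
`(X - α)(X - β) q` with `q` monic, then `|α|²|β|²` is at most the sum of the
squared norms of the coefficients. -/
lemma landau_two (α β : ℂ) (hα : α ≠ 0) (hβ : β ≠ 0) (q : ℂ[X]) (hq : q.Monic)
    (N : ℕ) (hN : q.natDegree + 2 ≤ N) :
    Complex.normSq α * Complex.normSq β
      ≤ ∑ i ∈ Finset.range (N + 1),
          Complex.normSq (((X - C α) * ((X - C β) * q)).coeff i) := by
  have hq0 : q ≠ 0 := hq.ne_zero
  set w1 := conj α with hw1
  set w2 := conj β with hw2
  have hw1ne : w1 ≠ 0 := by simpa [hw1] using hα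
  have hw2ne : w2 ≠ 0 := by simpa [hw2] using hβ
  -- first replacement
  have hc1 : ((X - C β) * q).coeff N = 0 := by
    apply coeff_eq_zero_of_natDegree_lt
    have := natDegree_mul_le (p := X - C β) (q := q)
    have h1 : (X - C β).natDegree = 1 := natDegree_X_sub_C β
    omega
  have e1 := key α ((X - C β) * q) N
  rw [hc1] at e1
  simp only [Complex.normSq_zero, mul_zero, add_zero] at e1
  -- second replacement
  have hcomm : (C w1 * X - 1) * ((X - C β) * q) = (X - C β) * ((C w1 * X - 1) * q) := by
    ring
  have hd1 : (C w1 * X - 1).natDegree = 1 := by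
    have : (1 : ℂ[X]) = C 1 := by simp
    rw [this, natDegree_sub_C, natDegree_C_mul_X w1 hw1ne]
  have hc2 : ((C w1 * X - 1) * q).coeff N = 0 := by
    apply coeff_eq_zero_of_natDegree_lt
    have := natDegree_mul_le (p := C w1 * X - 1) (q := q)
    omega
  have e2 := key β ((C w1 * X - 1) * q) N
  rw [hc2] at e2
  simp only [Complex.normSq_zero, mul_zero, add_zero] at e2
  rw [hcomm] at e1
  rw [e1, e2]
  -- now bound the sum from below by the top coefficient of G
  set G := (C w2 * X - 1) * ((C w1 * X - 1) * q) with hG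
  have hd2 : (C w2 * X - 1).natDegree = 1 := by
    have : (1 : ℂ[X]) = C 1 := by simp
    rw [this, natDegree_sub_C, natDegree_C_mul_X w2 hw2ne]
  have hl1 : (C w1 * X - 1).leadingCoeff = w1 := by
    rw [leadingCoeff, hd1, coeff_sub, coeff_C_mul, coeff_X_one]
    simp [Polynomial.coeff_one]
  have hl2 : (C w2 * X - 1).leadingCoeff = w2 := by
    rw [leadingCoeff, hd2, coeff_sub, coeff_C_mul, coeff_X_one]
    simp [Polynomial.coeff_one]
  have hne1 : (C w1 * X - 1) ≠ 0 := fun hz => by simp [hz] at hd1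
  have hne2 : (C w2 * X - 1) ≠ 0 := fun hz => by simp [hz] at hd2
  have hmulne : (C w1 * X - 1) * q ≠ 0 := mul_ne_zero hne1 hq0
  have hdG : G.natDegree = q.natDegree + 2 := by
    rw [hG, natDegree_mul hne2 hmulne, natDegree_mul hne1 hq0, hd1, hd2]
    ring
  have hlG : G.leadingCoeff = w2 * w1 := by
    rw [hG, leadingCoeff_mul, leadingCoeff_mul, hl1, hl2, hq.leadingCoeff, mul_one]
  have hcoeffG : G.coeff (q.natDegree + 2) = w2 * w1 := by
    rw [← hdG, ← leadingCoeff, hlG]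
  have hmem : q.natDegree + 2 ∈ Finset.range (N + 1) := by
    rw [Finset.mem_range]; omega
  calc Complex.normSq α * Complex.normSq β
      = Complex.normSq (G.coeff (q.natDegree + 2)) := by
        rw [hcoeffG, Complex.normSq_mul, hw1, hw2, Complex.normSq_conj,
          Complex.normSq_conj, mul_comm]
    _ ≤ ∑ i ∈ Finset.range (N + 1), Complex.normSq (G.coeff i) :=
        Finset.single_le_sum (fun i _ => Complex.normSq_nonneg _) hmem

/-- Product of a nonempty multiset of complex numbers each of norm `< 1` has norm `< 1`. -/
lemma prod_lt_one : ∀ (s : Multiset ℂ), s ≠ 0 → (∀ x ∈ s, ‖x‖ < 1) → ‖s.prod‖ < 1 := by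
  intro s
  induction s using Multiset.induction_on with
  | empty => intro h _; exact absurd rfl h
  | cons a s ih =>
    intro _ h
    rw [Multiset.prod_cons, norm_mul]
    have ha : ‖a‖ < 1 := h a (Multiset.mem_cons_self a s)
    rcases eq_or_ne s 0 with rfl | hs0
    · simpa using ha
    · have hps : ‖s.prod‖ < 1 := ih hs0 fun x hx => h x (Multiset.mem_cons_of_mem hx)
      have h1 : (0:ℝ) ≤ ‖s.prod‖ := norm_nonneg _
      have h2 : (0:ℝ) ≤ ‖a‖ := norm_nonneg _
      nlinarith

/-- A monic integer polynomial of positive degree with nonzero constant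
coefficient has a complex root of norm at least 1. -/
lemma exists_big_root (p : ℤ[X]) (hm : p.Monic) (hd : 1 ≤ p.natDegree)
    (h0 : p.coeff 0 ≠ 0) :
    ∃ α : ℂ, (p.map (Int.castRingHom ℂ)).eval α = 0 ∧ 1 ≤ ‖α‖ := by
  set P := p.map (Int.castRingHom ℂ) with hPdef
  have hPm : P.Monic := hm.map _
  have hProots : P = (P.roots.map fun a => X - C a).prod :=
    (IsAlgClosed.splits P).eq_prod_roots_of_monic hPm
  by_contra hcon
  push_neg at hcon
  have heval : P.eval 0 = ((p.coeff 0 : ℤ) : ℂ) := by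
    rw [← Polynomial.coeff_zero_eq_eval_zero, hPdef, coeff_map]
    simp
  have h1 : (1:ℝ) ≤ ‖P.eval 0‖ := by
    rw [heval, show ((p.coeff 0 : ℤ) : ℂ) = (((p.coeff 0 : ℤ) : ℝ) : ℂ) by push_cast; ring,
      Complex.norm_real, Real.norm_eq_abs, ← Int.cast_abs]
    have : (1:ℤ) ≤ |p.coeff 0| := Int.one_le_abs h0
    exact_mod_cast this
  have hcard : P.roots.card = p.natDegree := by
    have hs := (Polynomial.splits_iff_card_roots (f := P)).mp (IsAlgClosed.splits P)
    rw [hs, hm.natDegree_map]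
  have h2 : ‖P.eval 0‖ < 1 := by
    have heval2 : P.eval 0 = (P.roots.map fun a => -a).prod := by
      conv_lhs => rw [hProots]
      rw [Polynomial.eval_multiset_prod, Multiset.map_map]
      congr 1
      apply Multiset.map_congr rfl
      intro x _
      simp
    rw [heval2]
    apply prod_lt_one
    · have : P.roots ≠ 0 := by
        intro hz
        rw [hz] at hcard
        simp at hcard
        omega
      simpa [Multiset.map_eq_zero] using this
    · intro x hx
      obtain ⟨a, ha, rfl⟩ := Multiset.mem_map.mp hx
      rw [norm_neg]
      exact hcon a (Polynomial.mem_roots'.mp ha).2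
  linarith

/-- Every root of norm `≥ 1` of `f` has norm at least `A - S/2`. -/
lemma root_bound (f : ℤ[X]) (m : ℕ) (hmonic : f.Monic) (hn : f.natDegree = m + 2)
    (A S : ℝ) (hA : A = |((f.coeff (m+1) : ℤ) : ℝ)|)
    (hS : S = ∑ i ∈ Finset.range (m+1), |((f.coeff i : ℤ) : ℝ)|)
    (hAS : S + 2 ≤ A) (hS0 : 0 ≤ S)
    (α : ℂ) (hroot : (f.map (Int.castRingHom ℂ)).eval α = 0) (hα : 1 ≤ ‖α‖) :
    A - S / 2 ≤ ‖α‖ := by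
  set P := f.map (Int.castRingHom ℂ) with hPdef
  have hPm : P.Monic := hmonic.map _
  have hPd : P.natDegree = m + 2 := by rw [hPdef, hmonic.natDegree_map, hn]
  have hcoeff : ∀ i, P.coeff i = ((f.coeff i : ℤ) : ℂ) := by
    intro i; rw [hPdef, coeff_map]; simp
  have hev : ∑ i ∈ Finset.range (m + 2 + 1), P.coeff i * α ^ i = 0 := by
    rw [← Polynomial.eval_eq_sum_range' (by omega : P.natDegree < m + 2 + 1)]
    exact hroot
  rw [Finset.sum_range_succ, Finset.sum_range_succ] at hev
  have htop : P.coeff (m + 2) = 1 := by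
    have := hPm.coeff_natDegree
    rwa [hPd] at this
  rw [htop, one_mul, hcoeff (m+1)] at hev
  set c : ℂ := ((f.coeff (m+1) : ℤ) : ℂ) with hc
  have hkey : α ^ (m+1) * (α + c) = -∑ i ∈ Finset.range (m+1), P.coeff i * α ^ i := by
    have : α ^ (m+2) = α ^ (m+1) * α := by ring
    linear_combination hev
  have hnormc : ‖c‖ = A := by
    rw [hc, hA, show ((f.coeff (m+1) : ℤ) : ℂ) = (((f.coeff (m+1) : ℤ) : ℝ) : ℂ) by
      push_cast; ring, Complex.norm_real, Real.norm_eq_abs]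
  set x := ‖α‖ with hx
  set y := ‖α + c‖ with hy
  have hxpos : (0:ℝ) < x := lt_of_lt_of_le one_pos hα
  have hy0 : (0:ℝ) ≤ y := norm_nonneg _
  -- norm inequality
  have h1 : x ^ (m+1) * y ≤ S * x ^ m := by
    have heq : x ^ (m+1) * y = ‖α ^ (m+1) * (α + c)‖ := by
      rw [norm_mul, norm_pow]
    rw [heq, hkey, norm_neg]
    calc ‖∑ i ∈ Finset.range (m+1), P.coeff i * α ^ i‖
        ≤ ∑ i ∈ Finset.range (m+1), ‖P.coeff i * α ^ i‖ := norm_sum_le _ _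
      _ ≤ ∑ i ∈ Finset.range (m+1), |((f.coeff i : ℤ) : ℝ)| * x ^ m := by
          apply Finset.sum_le_sum
          intro i hi
          rw [norm_mul, norm_pow, hcoeff i]
          have hni : ‖((f.coeff i : ℤ) : ℂ)‖ = |((f.coeff i : ℤ) : ℝ)| := by
            rw [show ((f.coeff i : ℤ) : ℂ) = (((f.coeff i : ℤ) : ℝ) : ℂ) by push_cast; ring,
              Complex.norm_real, Real.norm_eq_abs]
          rw [hni]
          apply mul_le_mul_of_nonneg_left _ (abs_nonneg _)
          have him : i ≤ m := by
            have := Finset.mem_range.mp hi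
            omega
          exact pow_le_pow_right₀ hα him
      _ = S * x ^ m := by rw [hS, Finset.sum_mul]
  -- divide by x^m
  have h2 : x * y ≤ S := by
    have hpm : (0:ℝ) < x ^ m := pow_pos hxpos m
    have : x ^ m * (x * y) ≤ x ^ m * S := by
      calc x ^ m * (x * y) = x ^ (m+1) * y := by ring
        _ ≤ S * x ^ m := h1
        _ = x ^ m * S := by ring
    exact le_of_mul_le_mul_left this hpm
  have htri : A ≤ x + y := by
    have : c = (α + c) - α := by ring
    calc A = ‖c‖ := hnormc.symm
      _ = ‖(α + c) - α‖ := by rw [← this]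
      _ ≤ ‖α + c‖ + ‖α‖ := norm_sub_le _ _
      _ = x + y := by rw [hx, hy]; ring
  -- conclude
  have hyS : y ≤ S := by nlinarith
  have hx2 : 2 ≤ x := by linarith
  have hy2 : y ≤ S / 2 := by nlinarith
  linarith

set_option maxHeartbeats 1000000 in
lemma main_aux (f g h : ℤ[X]) (m : ℕ) (hf : f = g * h) (hg : g.Monic) (hh : h.Monic)
    (hgu : ¬IsUnit g) (hhu : ¬IsUnit h) (hn : f.natDegree = m + 2) (hmonic : f.Monic)
    (h0 : f.coeff 0 ≠ 0)
    (hbig : |f.coeff (m+1)| > 1 + ∑ i ∈ Finset.range (m+1), |f.coeff i|) : False := by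
  -- degrees of the factors
  have hgd : 1 ≤ g.natDegree := by
    by_contra hcon
    push_neg at hcon
    exact hgu (by rw [eq_one_of_monic_natDegree_zero hg (by omega)]; exact isUnit_one)
  have hhd : 1 ≤ h.natDegree := by
    by_contra hcon
    push_neg at hcon
    exact hhu (by rw [eq_one_of_monic_natDegree_zero hh (by omega)]; exact isUnit_one)
  -- constant coefficients nonzero
  have hc0 : g.coeff 0 * h.coeff 0 ≠ 0 := by
    rw [← Polynomial.mul_coeff_zero, ← hf]; exact h0
  have hg0 : g.coeff 0 ≠ 0 := fun hz => hc0 (by rw [hz, zero_mul])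
  have hh0 : h.coeff 0 ≠ 0 := fun hz => hc0 (by rw [hz, mul_zero])
  -- big roots of each factor
  obtain ⟨α, hαroot, hα1⟩ := exists_big_root g hg hgd hg0
  obtain ⟨β, hβroot, hβ1⟩ := exists_big_root h hh hhd hh0
  have hαf : (f.map (Int.castRingHom ℂ)).eval α = 0 := by
    rw [hf, Polynomial.map_mul, eval_mul, hαroot, zero_mul]
  have hβf : (f.map (Int.castRingHom ℂ)).eval β = 0 := by
    rw [hf, Polynomial.map_mul, eval_mul, hβroot, mul_zero]
  -- real constants
  set A : ℝ := |((f.coeff (m+1) : ℤ) : ℝ)| with hAdef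
  set S : ℝ := ∑ i ∈ Finset.range (m+1), |((f.coeff i : ℤ) : ℝ)| with hSdef
  have hS0 : 0 ≤ S := Finset.sum_nonneg fun i _ => abs_nonneg _
  have hAS : S + 2 ≤ A := by
    have hb : (1 + ∑ i ∈ Finset.range (m+1), |f.coeff i|) + 1 ≤ |f.coeff (m+1)| :=
      Int.add_one_le_iff.mpr hbig
    have hb2 : (((1 + ∑ i ∈ Finset.range (m+1), |f.coeff i|) + 1 : ℤ) : ℝ)
        ≤ ((|f.coeff (m+1)| : ℤ) : ℝ) := by exact_mod_cast hb
    rw [hAdef, hSdef]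
    push_cast at hb2 ⊢
    linarith
  have hxb := root_bound f m hmonic hn A S rfl rfl hAS hS0 α hαf hα1
  have hyb := root_bound f m hmonic hn A S rfl rfl hAS hS0 β hβf hβ1
  -- factor out the two roots over ℂ
  set P := f.map (Int.castRingHom ℂ) with hPdef
  have hPm : P.Monic := hmonic.map _
  have hPd : P.natDegree = m + 2 := by rw [hPdef, hmonic.natDegree_map, hn]
  have hdvd : (X - C α) * (X - C β) ∣ P := by
    rw [hPdef, hf, Polynomial.map_mul]
    exact mul_dvd_mul ((dvd_iff_isRoot).mpr hαroot) ((dvd_iff_isRoot).mpr hβroot)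
  obtain ⟨q, hq⟩ := hdvd
  have hPfac : P = (X - C α) * ((X - C β) * q) := by rw [hq]; ring
  have hfacm : ((X - C α) * (X - C β)).Monic := (monic_X_sub_C α).mul (monic_X_sub_C β)
  have hqm : q.Monic := hfacm.of_mul_monic_left (hq ▸ hPm)
  have hqd : q.natDegree = m := by
    have := hPd
    rw [hq, hfacm.natDegree_mul hqm, (monic_X_sub_C α).natDegree_mul (monic_X_sub_C β),
      natDegree_X_sub_C, natDegree_X_sub_C] at this
    omega
  have hαne : α ≠ 0 := by
    intro hz; rw [hz, norm_zero] at hα1; linarith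
  have hβne : β ≠ 0 := by
    intro hz; rw [hz, norm_zero] at hβ1; linarith
  -- Landau bound
  have hland := landau_two α β hαne hβne q hqm (m + 2) (by omega)
  rw [← hPfac] at hland
  -- upper bound the coefficient sum
  have hcoeff : ∀ i, P.coeff i = ((f.coeff i : ℤ) : ℂ) := by
    intro i; rw [hPdef, coeff_map]; simp
  have hnsq : ∀ i, Complex.normSq (P.coeff i) = ((f.coeff i : ℤ) : ℝ) ^ 2 := by
    intro i
    rw [hcoeff i, show ((f.coeff i : ℤ) : ℂ) = (((f.coeff i : ℤ) : ℝ) : ℂ) by push_cast; ring,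
      Complex.normSq_ofReal]
    ring
  have htop : f.coeff (m + 2) = 1 := by
    have := hmonic.coeff_natDegree
    rwa [hn] at this
  have hsum : ∑ i ∈ Finset.range (m + 2 + 1), Complex.normSq (P.coeff i)
      ≤ 1 + A ^ 2 + S ^ 2 := by
    rw [Finset.sum_range_succ, Finset.sum_range_succ]
    simp only [hnsq]
    have e1 : ((f.coeff (m+2) : ℤ) : ℝ) ^ 2 = 1 := by rw [htop]; norm_num
    have e2 : ((f.coeff (m+1) : ℤ) : ℝ) ^ 2 = A ^ 2 := by rw [hAdef, _root_.sq_abs]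
    have e3 : ∑ i ∈ Finset.range (m+1), ((f.coeff i : ℤ) : ℝ) ^ 2 ≤ S ^ 2 := by
      rw [hSdef]
      calc ∑ i ∈ Finset.range (m+1), ((f.coeff i : ℤ) : ℝ) ^ 2
          = ∑ i ∈ Finset.range (m+1), |((f.coeff i : ℤ) : ℝ)| ^ 2 := by
            apply Finset.sum_congr rfl; intro i _; rw [_root_.sq_abs]
        _ ≤ (∑ i ∈ Finset.range (m+1), |((f.coeff i : ℤ) : ℝ)|) ^ 2 :=
            Finset.sum_sq_le_sq_sum_of_nonneg fun i _ => abs_nonneg _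
    rw [e1, e2]
    linarith
  have hfinal : Complex.normSq α * Complex.normSq β ≤ 1 + A ^ 2 + S ^ 2 :=
    le_trans hland hsum
  -- final contradiction
  have hnx : Complex.normSq α = ‖α‖ ^ 2 := by rw [Complex.normSq_eq_norm_sq]
  have hny : Complex.normSq β = ‖β‖ ^ 2 := by rw [Complex.normSq_eq_norm_sq]
  rw [hnx, hny] at hfinal
  set x := ‖α‖
  set y := ‖β‖
  have ht2 : 2 ≤ A - S / 2 := by linarith
  have hx2 : (A - S/2) ^ 2 ≤ x ^ 2 := by nlinarith
  have hy2 : (A - S/2) ^ 2 ≤ y ^ 2 := by nlinarith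
  have hx2n : (0:ℝ) ≤ (A - S/2) ^ 2 := sq_nonneg _
  have hprod : (A - S/2) ^ 2 * (A - S/2) ^ 2 ≤ x ^ 2 * y ^ 2 := by
    apply mul_le_mul hx2 hy2 hx2n (by nlinarith)
  have hcontra : (A - S/2) ^ 2 * (A - S/2) ^ 2 ≤ 1 + A ^ 2 + S ^ 2 := le_trans hprod hfinal
  have hu0 : (0:ℝ) ≤ A - S - 2 := by linarith
  nlinarith [hcontra, hS0, hu0, mul_nonneg hS0 hu0, mul_nonneg hS0 hS0, mul_nonneg hu0 hu0,
    mul_nonneg (mul_nonneg hS0 hS0) hu0, mul_nonneg (mul_nonneg hS0 hu0) hu0,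
    mul_nonneg (mul_nonneg hS0 hS0) hS0, mul_nonneg (mul_nonneg hu0 hu0) hu0]

end PerronAux

theorem perron_criterion (f : Polynomial ℤ) (n : ℕ) (hn : f.natDegree = n) (hdeg : 2 ≤ n)
    (hmonic : f.Monic) (h0 : f.coeff 0 ≠ 0)
    (hbig : |f.coeff (n - 1)| > 1 + ∑ i ∈ Finset.range (n - 1), |f.coeff i|) :
    Irreducible (f.map (Int.castRingHom ℚ)) := by
  obtain ⟨m, rfl⟩ : ∃ m, n = m + 2 := ⟨n - 2, by omega⟩
  have hidx : m + 2 - 1 = m + 1 := by omega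
  rw [hidx] at hbig
  rw [← Polynomial.IsPrimitive.Int.irreducible_iff_irreducible_map_cast hmonic.isPrimitive]
  by_contra hnot
  have hfu : ¬IsUnit f := by
    intro hu
    have := Polynomial.natDegree_eq_zero_of_isUnit hu
    omega
  rw [irreducible_iff] at hnot
  push_neg at hnot
  obtain ⟨g, h, hf, hgu, hhu⟩ := hnot hfu
  have hlc : g.leadingCoeff * h.leadingCoeff = 1 := by
    rw [← Polynomial.leadingCoeff_mul, ← hf]; exact hmonic
  rcases Int.mul_eq_one_iff_eq_one_or_neg_one.mp hlc with ⟨ha, hb⟩ | ⟨ha, hb⟩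
  · exact PerronAux.main_aux f g h m hf ha hb hgu hhu hn hmonic h0 hbig
  · have hf' : f = (-g) * (-h) := by rw [neg_mul_neg]; exact hf
    have hga : (-g).Monic := by
      unfold Polynomial.Monic
      rw [leadingCoeff_neg, ha]; norm_num
    have hhb : (-h).Monic := by
      unfold Polynomial.Monic
      rw [leadingCoeff_neg, hb]; norm_num
    have hgu' : ¬IsUnit (-g) := fun hu => hgu (by simpa using hu.neg)
    have hhu' : ¬IsUnit (-h) := fun hu => hhu (by simpa using hu.neg)
    exact PerronAux.main_aux f (-g) (-h) m hf' hga hhb hgu' hhu' hn hmonic h0 hbig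
end

section
/- Let f = a_0 + a_1 x + ... + a_{n-1} x^{n-1} + x^n be a monic polynomial of degree n ≥ 2 with complex coefficients, a_0 ≠ 0, satisfying |a_{n-1}| > 1 + |a_{n-2}| + ... + |a_1| + |a_0|. Then exactly n-1 of the zeros of f (counted with multiplicity) lie in the open unit disk |z| < 1, and exactly one zero lies in |z| > 1. -/
open Polynomial Complex intervalIntegral
open scoped Real
open Polynomial
open scoped Classical

noncomputable def circ (θ : ℝ) : ℂ := Complex.exp (θ * Complex.I)

lemma circ_abs (θ : ℝ) : ‖circ θ‖ = 1 := Complex.norm_exp_ofReal_mul_I θ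

lemma circ_ne_zero (θ : ℝ) : circ θ ≠ 0 := Complex.exp_ne_zero _

lemma circ_continuous : Continuous circ :=
  Complex.continuous_exp.comp (Complex.continuous_ofReal.mul continuous_const)

lemma circ_hasDerivAt (θ : ℝ) : HasDerivAt circ (Complex.I * circ θ) θ := by
  have h : HasDerivAt (fun t : ℝ => (t : ℂ) * Complex.I) Complex.I θ := by
    simpa using (Complex.ofRealCLM.hasDerivAt (x := θ)).mul_const Complex.I
  unfold circ
  simpa [mul_comm] using h.cexp

lemma circ_sub_ne {r : ℂ} (hr : ‖r‖ ≠ 1) (θ : ℝ) : circ θ - r ≠ 0 := by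
  intro h
  rw [sub_eq_zero] at h
  exact hr (h ▸ circ_abs θ)

lemma circ_two_pi : circ (2 * π) = 1 := by
  unfold circ
  push_cast
  exact Complex.exp_two_pi_mul_I

lemma circ_zero : circ 0 = 1 := by simp [circ]

lemma cont_integrand {r : ℂ} (hr : ‖r‖ ≠ 1) :
    Continuous (fun θ : ℝ => Complex.I * circ θ / (circ θ - r)) :=
  (continuous_const.mul circ_continuous).div (circ_continuous.sub continuous_const)
    (fun θ => circ_sub_ne hr θ)

lemma integral_circ_inside {r : ℂ} (hr : ‖r‖ < 1) :
    ∫ θ in (0:ℝ)..(2*π), Complex.I * circ θ / (circ θ - r) = 2 * π * Complex.I := by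
  have hr' : ‖r‖ ≠ 1 := by linarith
  set u : ℝ → ℂ := fun θ => 1 - r * Complex.exp (-(θ:ℂ) * Complex.I) with hu
  have hunorm : ∀ θ : ℝ, ‖-(r * Complex.exp (-(θ:ℂ) * Complex.I))‖ < 1 := by
    intro θ
    have : (-(θ:ℂ)) * Complex.I = ((-θ:ℝ):ℂ) * Complex.I := by push_cast; ring
    rw [norm_neg]
    simp only [norm_mul, this, Complex.norm_exp_ofReal_mul_I]
    simpa using hr
  have hune : ∀ θ : ℝ, u θ ≠ 0 := by
    intro θ h
    have h1 : ‖(1:ℂ)‖ ≤ ‖-(r * Complex.exp (-(θ:ℂ) * Complex.I))‖ := by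
      have : (1:ℂ) = -(-(r * Complex.exp (-(θ:ℂ) * Complex.I))) + u θ := by rw [hu]; ring
      rw [this, h, add_zero, norm_neg]
    rw [norm_one] at h1
    exact absurd (lt_of_le_of_lt h1 (hunorm θ)) (lt_irrefl _)
  have huslit : ∀ θ : ℝ, u θ ∈ Complex.slitPlane := by
    intro θ
    have := Complex.mem_slitPlane_of_norm_lt_one (hunorm θ)
    simpa [hu, sub_eq_add_neg] using this
  have huderiv : ∀ θ : ℝ, HasDerivAt u (r * Complex.I * Complex.exp (-(θ:ℂ) * Complex.I)) θ := by
    intro θ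
    have h1 : HasDerivAt (fun t : ℝ => -(t:ℂ) * Complex.I) (-Complex.I) θ := by
      simpa using ((Complex.ofRealCLM.hasDerivAt (x := θ)).neg.mul_const Complex.I)
    have h2 := h1.cexp
    have h3 := (h2.const_mul r).const_sub 1
    refine h3.congr_deriv (Eq.symm ?_)
    ring
  set F : ℝ → ℂ := fun θ => θ * Complex.I + Complex.log (u θ) with hF
  have hFderiv : ∀ θ ∈ Set.uIcc (0:ℝ) (2*π), HasDerivAt F (Complex.I * circ θ / (circ θ - r)) θ := by
    intro θ _
    have hlog : HasDerivAt (fun t => Complex.log (u t))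
        ((u θ)⁻¹ * (r * Complex.I * Complex.exp (-(θ:ℂ) * Complex.I))) θ :=
      (Complex.hasDerivAt_log (huslit θ)).comp θ (huderiv θ)
    have hid : HasDerivAt (fun t : ℝ => (t:ℂ) * Complex.I) Complex.I θ := by
      simpa using ((Complex.ofRealCLM.hasDerivAt (x := θ)).mul_const Complex.I)
    have h := hid.add hlog
    refine h.congr_deriv (Eq.symm ?_)
    have hexp : Complex.exp (-(θ:ℂ) * Complex.I) * circ θ = 1 := by
      rw [circ, ← Complex.exp_add]; simp
    have hcne := circ_sub_ne hr' θ
    have hne : 1 - r * Complex.exp (-(θ:ℂ) * Complex.I) ≠ 0 := by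
      have := hune θ; rw [hu] at this; exact this
    show Complex.I * circ θ / (circ θ - r)
        = Complex.I + (u θ)⁻¹ * (r * Complex.I * Complex.exp (-(θ:ℂ) * Complex.I))
    have h1 : (1 - r * Complex.exp (-(θ:ℂ) * Complex.I)) * circ θ = circ θ - r := by
      have hexp : Complex.exp (-(θ:ℂ) * Complex.I) * circ θ = 1 := by
        rw [circ, ← Complex.exp_add]; simp
      calc (1 - r * Complex.exp (-(θ:ℂ) * Complex.I)) * circ θ
          = circ θ - r * (Complex.exp (-(θ:ℂ) * Complex.I) * circ θ) := by ring
        _ = circ θ - r := by rw [hexp, mul_one]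
    calc Complex.I * circ θ / (circ θ - r)
        = Complex.I * circ θ / ((1 - r * Complex.exp (-(θ:ℂ) * Complex.I)) * circ θ) := by
          rw [h1]
      _ = Complex.I / (1 - r * Complex.exp (-(θ:ℂ) * Complex.I)) := by
          rw [mul_comm Complex.I (circ θ),
            mul_comm (1 - r * Complex.exp (-(θ:ℂ) * Complex.I)) (circ θ),
            mul_div_mul_left _ _ (circ_ne_zero θ)]
      _ = Complex.I + (u θ)⁻¹ * (r * Complex.I * Complex.exp (-(θ:ℂ) * Complex.I)) := by
          rw [hu, div_eq_iff hne, add_mul,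
            mul_comm ((1 - r * Complex.exp (-(θ:ℂ) * Complex.I))⁻¹
              * (r * Complex.I * Complex.exp (-(θ:ℂ) * Complex.I))) _,
            ← mul_assoc, mul_inv_cancel₀ hne, one_mul]
          ring
  rw [integral_eq_sub_of_hasDerivAt hFderiv ((cont_integrand hr').intervalIntegrable _ _)]
  have h2pi : Complex.exp (-(((2*π:ℝ)):ℂ) * Complex.I) = 1 := by
    rw [show (-(((2*π:ℝ)):ℂ) * Complex.I) = ((-1 : ℤ) * (2*(π:ℂ)*Complex.I)) by push_cast; ring,
      Complex.exp_int_mul, Complex.exp_two_pi_mul_I, one_zpow]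
  have hu2 : u (2*π) = u 0 := by
    show 1 - r * Complex.exp (-(((2*π:ℝ)):ℂ) * Complex.I)
        = 1 - r * Complex.exp (-(((0:ℝ)):ℂ) * Complex.I)
    rw [h2pi]
    norm_num
  show ((2*π:ℝ):ℂ) * Complex.I + Complex.log (u (2*π))
      - (((0:ℝ):ℂ) * Complex.I + Complex.log (u 0)) = 2*π*Complex.I
  rw [hu2]
  push_cast
  ring


lemma integral_circ_outside {r : ℂ} (hr : 1 < ‖r‖) :
    ∫ θ in (0:ℝ)..(2*π), Complex.I * circ θ / (circ θ - r) = 0 := by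
  have hr' : ‖r‖ ≠ 1 := by linarith
  have hr0 : r ≠ 0 := by
    intro h; rw [h] at hr; simp at hr; linarith
  set u : ℝ → ℂ := fun θ => 1 - circ θ / r with hu
  have hunorm : ∀ θ : ℝ, ‖-(circ θ / r)‖ < 1 := by
    intro θ
    rw [norm_neg]
    simp only [norm_div, circ_abs]
    rw [div_lt_one (by linarith)]
    exact hr
  have hune : ∀ θ : ℝ, u θ ≠ 0 := by
    intro θ h
    have h1 : ‖(1:ℂ)‖ ≤ ‖-(circ θ / r)‖ := by
      have : (1:ℂ) = -(-(circ θ / r)) + u θ := by rw [hu]; ring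
      rw [this, h, add_zero, norm_neg]
    rw [norm_one] at h1
    exact absurd (lt_of_le_of_lt h1 (hunorm θ)) (lt_irrefl _)
  have huslit : ∀ θ : ℝ, u θ ∈ Complex.slitPlane := by
    intro θ
    have := Complex.mem_slitPlane_of_norm_lt_one (hunorm θ)
    simpa [hu, sub_eq_add_neg] using this
  have huderiv : ∀ θ : ℝ, HasDerivAt u (-(Complex.I * circ θ) / r) θ := by
    intro θ
    have := ((circ_hasDerivAt θ).div_const r).const_sub 1
    refine this.congr_deriv (Eq.symm ?_)
    ring
  set F : ℝ → ℂ := fun θ => Complex.log (u θ) with hF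
  have hFderiv : ∀ θ ∈ Set.uIcc (0:ℝ) (2*π), HasDerivAt F (Complex.I * circ θ / (circ θ - r)) θ := by
    intro θ _
    have hlog : HasDerivAt F ((u θ)⁻¹ * (-(Complex.I * circ θ) / r)) θ :=
      (Complex.hasDerivAt_log (huslit θ)).comp θ (huderiv θ)
    convert hlog using 1
    have hcne := circ_sub_ne hr' θ
    have hune' : 1 - circ θ / r ≠ 0 := hune θ
    show Complex.I * circ θ / (circ θ - r) = (1 - circ θ / r)⁻¹ * (-(Complex.I * circ θ) / r)
    have h1 : (1 - circ θ / r) * (-r) = circ θ - r := by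
      field_simp
      ring
    calc Complex.I * circ θ / (circ θ - r)
        = Complex.I * circ θ / ((1 - circ θ / r) * (-r)) := by rw [h1]
      _ = (1 - circ θ / r)⁻¹ * (-(Complex.I * circ θ) / r) := by
          rw [div_mul_eq_div_div, div_eq_mul_inv (Complex.I * circ θ / (1 - circ θ / r)) (-r),
            div_eq_mul_inv (Complex.I * circ θ) (1 - circ θ / r)]
          rw [show (-r)⁻¹ = -r⁻¹ by ring, div_eq_mul_inv (-(Complex.I * circ θ)) r]
          ring
  rw [integral_eq_sub_of_hasDerivAt hFderiv ((cont_integrand hr').intervalIntegrable _ _)]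
  have hu2 : u (2*π) = u 0 := by
    show 1 - circ (2*π) / r = 1 - circ 0 / r
    rw [circ_two_pi, circ_zero]
  show Complex.log (u (2*π)) - Complex.log (u 0) = 0
  rw [hu2, sub_self]

lemma cont_list_sum (l : List ℂ) (h : ∀ r ∈ l, ‖r‖ ≠ 1) :
    Continuous (fun θ : ℝ => (l.map (fun r => Complex.I * circ θ / (circ θ - r))).sum) := by
  induction l with
  | nil => simpa using continuous_const
  | cons r t ih =>
    simp only [List.map_cons, List.sum_cons]
    exact (cont_integrand (h r (List.mem_cons_self))).add
      (ih (fun s hs => h s (List.mem_cons_of_mem r hs)))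

lemma integral_list_sum (l : List ℂ) (h : ∀ r ∈ l, ‖r‖ ≠ 1) :
    ∫ θ in (0:ℝ)..(2*π), (l.map (fun r => Complex.I * circ θ / (circ θ - r))).sum
      = (l.countP (fun r => decide (‖r‖ < 1)) : ℂ) * (2 * π * Complex.I) := by
  induction l with
  | nil => simp
  | cons r t ih =>
    have hr := h r (List.mem_cons_self)
    have ht : ∀ s ∈ t, ‖s‖ ≠ 1 := fun s hs => h s (List.mem_cons_of_mem r hs)
    simp only [List.map_cons, List.sum_cons]
    rw [intervalIntegral.integral_add ((cont_integrand hr).intervalIntegrable _ _)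
      ((cont_list_sum t ht).intervalIntegrable _ _), ih ht, List.countP_cons]
    rcases lt_or_gt_of_ne hr with hlt | hgt
    · rw [integral_circ_inside hlt]
      simp only [hlt, decide_true]
      push_cast
      ring
    · rw [integral_circ_outside hgt]
      have : ¬ (‖r‖ < 1) := by linarith
      simp only [this, decide_false]
      push_cast
      ring

lemma eval_derivative_prod (l : List ℂ) (z : ℂ) (hz : ∀ r ∈ l, z ≠ r) :
    Polynomial.eval z (Polynomial.derivative (l.map (fun r => Polynomial.X - Polynomial.C r)).prod)
      = (l.map (fun r => (z - r)⁻¹)).sum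
        * Polynomial.eval z (l.map (fun r => Polynomial.X - Polynomial.C r)).prod := by
  induction l with
  | nil => simp
  | cons r t ih =>
    have hzr : z - r ≠ 0 := sub_ne_zero.mpr (hz r (List.mem_cons_self))
    have ht : ∀ s ∈ t, z ≠ s := fun s hs => hz s (List.mem_cons_of_mem r hs)
    simp only [List.map_cons, List.prod_cons, List.sum_cons, derivative_mul, eval_add, eval_mul,
      derivative_sub, derivative_X, derivative_C, sub_zero, one_mul, eval_sub, eval_X, eval_C]
    rw [ih ht]
    field_simp

lemma list_sum_mul_left (c : ℂ) (g : ℂ → ℂ) (l : List ℂ) :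
    (l.map (fun r => c * g r)).sum = c * (l.map g).sum := by
  induction l with
  | nil => simp
  | cons r t ih => simp [ih, mul_add]

theorem perron_root_location (f : Polynomial ℂ) (n : ℕ) (hn : f.natDegree = n) (hdeg : 2 ≤ n)
    (hmonic : f.Monic) (h0 : f.coeff 0 ≠ 0)
    (hbig : ‖f.coeff (n - 1)‖ >
      1 + ∑ i ∈ Finset.range (n - 1), ‖f.coeff i‖) :
    Multiset.card (f.roots.filter (fun z => ‖z‖ < 1)) = n - 1 ∧
    Multiset.card (f.roots.filter (fun z => 1 < ‖z‖)) = 1 := by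
  set α : ℂ := f.coeff (n - 1) with hα
  set S : ℝ := ∑ i ∈ Finset.range (n - 1), ‖f.coeff i‖ with hS
  have hαpos : (0:ℝ) < ‖α‖ := by
    have hSnn : 0 ≤ S := Finset.sum_nonneg fun i _ => (norm_nonneg _)
    linarith
  have hαne : α ≠ 0 := by
    intro h; rw [h] at hαpos; simp at hαpos
  -- Step 1: bound on the circle
  have hcirc : ∀ z : ℂ, ‖z‖ = 1 →
      ‖f.eval z - α * z^(n-1)‖ ≤ 1 + S := by
    intro z hz
    obtain ⟨m, rfl⟩ : ∃ m, n = m + 2 := ⟨n - 2, by omega⟩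
    have hm1 : m + 2 - 1 = m + 1 := rfl
    have heval : f.eval z = ∑ i ∈ Finset.range (m + 3), f.coeff i * z ^ i := by
      rw [Polynomial.eval_eq_sum_range, hn]
    have hcoeffn : f.coeff (m + 2) = 1 := by
      have := hmonic.coeff_natDegree
      rwa [hn] at this
    have hsplit : f.eval z - α * z^(m+2-1)
        = (∑ i ∈ Finset.range (m + 1), f.coeff i * z ^ i) + z ^ (m + 2) := by
      rw [heval, hm1, Finset.sum_range_succ, Finset.sum_range_succ, hcoeffn, hα, hm1]
      ring
    rw [hsplit]
    have h1 : ‖∑ i ∈ Finset.range (m + 1), f.coeff i * z ^ i‖ ≤ S := by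
      refine le_trans (norm_sum_le _ _) ?_
      rw [hS, hm1]
      refine Finset.sum_le_sum fun i _ => ?_
      rw [norm_mul, norm_pow, hz, one_pow, mul_one]
    calc ‖(∑ i ∈ Finset.range (m + 1), f.coeff i * z ^ i) + z ^ (m + 2)‖
        ≤ ‖∑ i ∈ Finset.range (m + 1), f.coeff i * z ^ i‖
          + ‖z ^ (m + 2)‖ := norm_add_le _ _
      _ ≤ S + 1 := by
          rw [norm_pow, hz, one_pow]
          exact add_le_add_left h1 1
      _ = 1 + S := by ring
  -- Step 2: no roots on the circle
  have hne : ∀ z : ℂ, ‖z‖ = 1 → f.eval z ≠ 0 := by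
    intro z hz h
    have h1 := hcirc z hz
    rw [h, zero_sub, norm_neg, norm_mul, norm_pow, hz, one_pow, mul_one] at h1
    linarith
  -- Step 3: roots
  have hcard : Multiset.card f.roots = n := by
    rw [← hn]
    exact (Polynomial.splits_iff_card_roots.mp (IsAlgClosed.splits f))
  have hprod : (f.roots.map fun a => Polynomial.X - Polynomial.C a).prod = f :=
    Polynomial.prod_multiset_X_sub_C_of_monic_of_roots_card_eq hmonic (by rw [hcard, hn])
  set l : List ℂ := f.roots.toList with hldef
  have hl : (l : Multiset ℂ) = f.roots := f.roots.coe_toList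
  have hroot : ∀ r ∈ l, f.eval r = 0 := by
    intro r hr
    have : r ∈ f.roots := by rw [← hl]; exact_mod_cast hr
    exact Polynomial.isRoot_of_mem_roots this
  have hne1 : ∀ r ∈ l, ‖r‖ ≠ 1 := fun r hr habs => hne r habs (hroot r hr)
  -- Step 4: pointwise identity between the sum over roots and f'/f
  have hfne : ∀ θ : ℝ, f.eval (circ θ) ≠ 0 := fun θ => hne _ (circ_abs θ)
  have hpt : ∀ θ : ℝ, (l.map (fun r => Complex.I * circ θ / (circ θ - r))).sum
      = Complex.I * circ θ * Polynomial.eval (circ θ) (Polynomial.derivative f)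
        / Polynomial.eval (circ θ) f := by
    intro θ
    have hzr : ∀ r ∈ l, circ θ ≠ r := by
      intro r hr h
      exact (hne1 r hr) (h ▸ circ_abs θ)
    have hfe : (l.map (fun r => Polynomial.X - Polynomial.C r)).prod = f := by
      rw [← hprod, ← hl]
      simp
    have hd := eval_derivative_prod l (circ θ) hzr
    rw [hfe] at hd
    rw [hd]
    have hterm : (l.map (fun r => Complex.I * circ θ / (circ θ - r)))
        = (l.map (fun r => (Complex.I * circ θ) * (circ θ - r)⁻¹)) := by
      simp [div_eq_mul_inv]
    rw [hterm, list_sum_mul_left, mul_comm ((l.map (fun r => (circ θ - r)⁻¹)).sum)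
      (Polynomial.eval (circ θ) f)]
    rw [mul_div_assoc, mul_div_assoc,
      mul_comm (Polynomial.eval (circ θ) f)
        ((List.map (fun r => (circ θ - r)⁻¹) l).sum / Polynomial.eval (circ θ) f),
      div_mul_cancel₀ _ (hfne θ)]
  -- Step 5: FTC / Rouché computation
  set E : ℝ → ℂ := fun θ => Complex.exp (-((n:ℂ)-1) * θ * Complex.I) with hE
  have hEabs : ∀ θ : ℝ, ‖E θ‖ = 1 := by
    intro θ
    have harg : -((n:ℂ)-1) * θ * Complex.I = (((-((n:ℝ)-1) * θ) : ℝ) : ℂ) * Complex.I := by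
      push_cast; ring
    rw [hE]
    simp only []
    rw [harg, Complex.norm_exp_ofReal_mul_I]
  have hcE : ∀ θ : ℝ, (circ θ)^(n-1) * E θ = 1 := by
    intro θ
    have h1 : (circ θ)^(n-1) = Complex.exp (((n-1 : ℕ) : ℂ) * (θ * Complex.I)) := by
      rw [Complex.exp_nat_mul, circ]
    have h2 : (((n-1 : ℕ) : ℂ)) = ((n:ℂ)-1) := by
      have : (1:ℕ) ≤ n := by omega
      push_cast [Nat.cast_sub this]
      ring
    rw [hE, h1, h2, ← Complex.exp_add,
      show ((n:ℂ)-1) * ((θ:ℂ)*Complex.I) + (-((n:ℂ)-1)*(θ:ℂ)*Complex.I) = 0 by ring,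
      Complex.exp_zero]
  set Q : ℝ → ℂ := fun θ => f.eval (circ θ) * E θ * α⁻¹ with hQ
  have hQkey : ∀ θ : ℝ, Q θ - 1 = (f.eval (circ θ) - α * (circ θ)^(n-1)) * E θ * α⁻¹ := by
    intro θ
    have hαα : α * α⁻¹ = 1 := mul_inv_cancel₀ hαne
    have hc := hcE θ
    rw [hQ]
    simp only []
    linear_combination ((circ θ)^(n-1) * E θ) * hαα + hc
  have hQnorm : ∀ θ : ℝ, ‖Q θ - 1‖ < 1 := by
    intro θ
    rw [hQkey θ]
    have h1 := hcirc (circ θ) (circ_abs θ)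
    calc ‖(f.eval (circ θ) - α * (circ θ)^(n-1)) * E θ * α⁻¹‖
        = ‖f.eval (circ θ) - α * (circ θ)^(n-1)‖ * ‖E θ‖
          * (‖α‖)⁻¹ := by
          simp [map_mul, map_inv₀]
      _ = ‖f.eval (circ θ) - α * (circ θ)^(n-1)‖ * (‖α‖)⁻¹ := by
          rw [hEabs θ, mul_one]
      _ ≤ (1 + S) * (‖α‖)⁻¹ := by
          apply mul_le_mul_of_nonneg_right h1
          positivity
      _ < 1 := by
          rw [← div_eq_mul_inv, div_lt_one hαpos]
          exact hbig
  have hQne : ∀ θ : ℝ, Q θ ≠ 0 := by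
    intro θ h
    have h1 := hQnorm θ
    rw [h, zero_sub, norm_neg, norm_one] at h1
    exact lt_irrefl _ h1
  have hQslit : ∀ θ : ℝ, Q θ ∈ Complex.slitPlane := by
    intro θ
    have := Complex.mem_slitPlane_of_norm_lt_one (hQnorm θ)
    simpa using this
  have hEne : ∀ θ : ℝ, E θ ≠ 0 := fun θ => Complex.exp_ne_zero _
  have hEderiv : ∀ θ : ℝ, HasDerivAt E (E θ * (-((n:ℂ)-1)*Complex.I)) θ := by
    intro θ
    have hi : HasDerivAt (fun t : ℝ => -((n:ℂ)-1)*(t:ℂ)*Complex.I) (-((n:ℂ)-1)*Complex.I) θ := by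
      have h1 := (Complex.ofRealCLM.hasDerivAt (x := θ)).const_mul (-((n:ℂ)-1))
      have h2 := h1.mul_const Complex.I
      simpa using h2
    exact hi.cexp
  have hfc : ∀ θ : ℝ, HasDerivAt (fun t : ℝ => f.eval (circ t))
      (Polynomial.eval (circ θ) (Polynomial.derivative f) * (Complex.I * circ θ)) θ := by
    intro θ
    exact (f.hasDerivAt (circ θ)).comp θ (circ_hasDerivAt θ)
  have hQderiv : ∀ θ : ℝ, HasDerivAt Q
      ((Polynomial.eval (circ θ) (Polynomial.derivative f) * (Complex.I * circ θ) * E θ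
        + f.eval (circ θ) * (E θ * (-((n:ℂ)-1)*Complex.I))) * α⁻¹) θ :=
    fun θ => ((hfc θ).mul (hEderiv θ)).mul_const α⁻¹
  set G : ℝ → ℂ := fun θ => Complex.I * circ θ
    * Polynomial.eval (circ θ) (Polynomial.derivative f) / Polynomial.eval (circ θ) f with hG
  set F : ℝ → ℂ := fun θ => ((n:ℂ)-1) * θ * Complex.I + Complex.log (Q θ) with hF
  have hFderiv : ∀ θ ∈ Set.uIcc (0:ℝ) (2*π), HasDerivAt F (G θ) θ := by
    intro θ _
    have hlog : HasDerivAt (fun t => Complex.log (Q t))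
        ((Q θ)⁻¹ * ((Polynomial.eval (circ θ) (Polynomial.derivative f) * (Complex.I * circ θ) * E θ
          + f.eval (circ θ) * (E θ * (-((n:ℂ)-1)*Complex.I))) * α⁻¹)) θ :=
      (Complex.hasDerivAt_log (hQslit θ)).comp θ (hQderiv θ)
    have hid : HasDerivAt (fun t : ℝ => ((n:ℂ)-1)*(t:ℂ)*Complex.I) (((n:ℂ)-1)*Complex.I) θ := by
      have h1 := (Complex.ofRealCLM.hasDerivAt (x := θ)).const_mul ((n:ℂ)-1)
      have h2 := h1.mul_const Complex.I
      simpa using h2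
    have h := hid.add hlog
    refine h.congr_deriv (Eq.symm ?_)
    rw [hG, hQ]
    simp only []
    field_simp [hfne θ, hEne θ, hαne]
    ring
  have hGcont : Continuous G := by
    rw [hG]
    exact ((continuous_const.mul circ_continuous).mul
      ((Polynomial.derivative f).continuous.comp circ_continuous)).div
      (f.continuous.comp circ_continuous) hfne
  have hI2 : (∫ θ in (0:ℝ)..(2*π), G θ) = ((n:ℂ)-1) * (2*π*Complex.I) := by
    rw [integral_eq_sub_of_hasDerivAt hFderiv (hGcont.intervalIntegrable _ _)]
    have hE2 : E (2*π) = 1 := by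
      rw [hE]
      show Complex.exp (-((n:ℂ)-1)*((2*π:ℝ):ℂ)*Complex.I) = 1
      rw [show -((n:ℂ)-1)*((2*π:ℝ):ℂ)*Complex.I = ((1-(n:ℤ)) : ℤ) * (2*(π:ℂ)*Complex.I) by
        push_cast; ring, Complex.exp_int_mul, Complex.exp_two_pi_mul_I, one_zpow]
    have hE0 : E 0 = 1 := by
      rw [hE]
      show Complex.exp (-((n:ℂ)-1)*((0:ℝ):ℂ)*Complex.I) = 1
      norm_num
    have hQper : Q (2*π) = Q 0 := by
      rw [hQ]
      show f.eval (circ (2*π)) * E (2*π) * α⁻¹ = f.eval (circ 0) * E 0 * α⁻¹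
      rw [circ_two_pi, circ_zero, hE2, hE0]
    show ((n:ℂ)-1) * ((2*π:ℝ):ℂ) * Complex.I + Complex.log (Q (2*π))
        - (((n:ℂ)-1)*((0:ℝ):ℂ)*Complex.I + Complex.log (Q 0)) = ((n:ℂ)-1)*(2*π*Complex.I)
    rw [hQper]
    push_cast
    ring
  have hI1 : (∫ θ in (0:ℝ)..(2*π), G θ)
      = ((l.countP (fun r => decide (‖r‖ < 1)) : ℕ) : ℂ) * (2*π*Complex.I) := by
    rw [← integral_list_sum l hne1]
    apply intervalIntegral.integral_congr
    intro θ _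
    exact (hpt θ).symm
  have h2πne : (2*(π:ℂ)*Complex.I) ≠ 0 :=
    mul_ne_zero (mul_ne_zero two_ne_zero (by exact_mod_cast Real.pi_ne_zero)) Complex.I_ne_zero
  have hcnt : ((l.countP (fun r => decide (‖r‖ < 1)) : ℕ) : ℂ) = ((n:ℂ)-1) :=
    mul_right_cancel₀ h2πne (hI1.symm.trans hI2)
  have hcntn : l.countP (fun r => decide (‖r‖ < 1)) = n - 1 := by
    have h1 : ((n:ℂ)-1) = ((n-1 : ℕ) : ℂ) := by
      have : (1:ℕ) ≤ n := by omega
      push_cast [Nat.cast_sub this]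
      ring
    rw [h1] at hcnt
    exact_mod_cast hcnt
  -- convert list count to multiset filter card
  have hfilt1 : Multiset.card (Multiset.filter (fun z => ‖z‖ < 1) f.roots)
      = l.countP (fun r => decide (‖r‖ < 1)) := by
    rw [← hl, ← Multiset.countP_eq_card_filter]
    rw [Multiset.coe_countP]
  have hfirst : Multiset.card (Multiset.filter (fun z => ‖z‖ < 1) f.roots) = n - 1 := by
    rw [hfilt1, hcntn]
  refine ⟨hfirst, ?_⟩
  have hrne : ∀ r ∈ f.roots, ‖r‖ ≠ 1 :=
    fun r hr h => hne r h (Polynomial.isRoot_of_mem_roots hr)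
  have hco : Multiset.filter (fun z => ¬ ‖z‖ < 1) f.roots
      = Multiset.filter (fun z => 1 < ‖z‖) f.roots := by
    apply Multiset.filter_congr
    intro r hr
    constructor
    · intro h
      exact lt_of_le_of_ne (not_lt.mp h) (Ne.symm (hrne r hr))
    · intro h
      exact not_lt.mpr h.le
  have hsum := Multiset.filter_add_not (fun z => ‖z‖ < 1) f.roots
  have hcards := congrArg Multiset.card hsum
  rw [Multiset.card_add, hco] at hcards
  rw [hcard] at hcards
  rw [hfirst] at hcards
  omega
end

section
/- Let f = a_0 + a_1 x + ... + a_n x^n ∈ ℤ[x] with |a_0| > |a_1| + |a_2| + ... + |a_n| and a_n ≠ 0. If |a_0| is prime, then f is irreducible in ℤ[x]. -/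
open Polynomial

/-- Every complex root of `f` has absolute value `> 1`. -/
lemma ps_root_abs {f : Polynomial ℤ} {n : ℕ} (hn : f.natDegree = n)
    (hbig : |f.coeff 0| > ∑ i ∈ Finset.Icc 1 n, |f.coeff i|)
    {z : ℂ} (hz : (f.map (Int.castRingHom ℂ)).eval z = 0) : 1 < ‖z‖ := by
  by_contra h
  push_neg at h
  have heval : (f.map (Int.castRingHom ℂ)).eval z
      = ∑ i ∈ Finset.range (n + 1), (f.coeff i : ℂ) * z ^ i := by
    rw [Polynomial.eval_map, Polynomial.eval₂_eq_sum_range, hn]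
    simp
  rw [heval, Finset.sum_range_succ'] at hz
  have hz' : (f.coeff 0 : ℂ) = -∑ i ∈ Finset.range n, (f.coeff (i + 1) : ℂ) * z ^ (i + 1) := by
    have := hz
    simp only [pow_zero, mul_one] at this
    linear_combination this
  have hb : |(f.coeff 0 : ℝ)| > ∑ i ∈ Finset.range n, |(f.coeff (i + 1) : ℝ)| := by
    have hs : ∑ i ∈ Finset.Icc 1 n, |f.coeff i| = ∑ i ∈ Finset.range n, |f.coeff (i + 1)| := by
      rw [← Finset.Ico_add_one_right_eq_Icc, Finset.sum_Ico_eq_sum_range]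
      simp [add_comm]
    rw [hs] at hbig
    exact_mod_cast hbig
  have habs : ‖(f.coeff 0 : ℂ)‖ ≤ ∑ i ∈ Finset.range n, |(f.coeff (i + 1) : ℝ)| := by
    rw [hz', norm_neg]
    calc ‖∑ i ∈ Finset.range n, (f.coeff (i + 1) : ℂ) * z ^ (i + 1)‖
        ≤ ∑ i ∈ Finset.range n, ‖(f.coeff (i + 1) : ℂ) * z ^ (i + 1)‖ := by
          exact norm_sum_le _ _
      _ ≤ ∑ i ∈ Finset.range n, |(f.coeff (i + 1) : ℝ)| := by
          apply Finset.sum_le_sum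
          intro i _
          rw [norm_mul, norm_pow]
          have h1 : ‖z‖ ^ (i + 1) ≤ 1 := pow_le_one₀ (norm_nonneg z) h
          have h1' : 0 ≤ ‖z‖ ^ (i + 1) := pow_nonneg (norm_nonneg z) _
          have h2 : ‖((f.coeff (i + 1) : ℂ))‖ = |(f.coeff (i + 1) : ℝ)| := by
            rw [show ((f.coeff (i + 1) : ℤ) : ℂ) = ((f.coeff (i + 1) : ℝ) : ℂ) by
              push_cast; ring, Complex.norm_real, Real.norm_eq_abs]
          rw [h2]
          nlinarith [abs_nonneg ((f.coeff (i + 1) : ℝ))]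
  rw [show ((f.coeff 0 : ℤ) : ℂ) = ((f.coeff 0 : ℝ) : ℂ) by push_cast; ring,
    Complex.norm_real, Real.norm_eq_abs] at habs
  linarith

/-- A nonconstant integer polynomial all of whose complex roots have abs `> 1`
has `|constant coefficient| > 1`. -/
lemma ps_const_coeff {g : Polynomial ℤ} (hg : 1 ≤ g.natDegree)
    (hroots : ∀ z : ℂ, (g.map (Int.castRingHom ℂ)).eval z = 0 → 1 < ‖z‖) :
    1 < |g.coeff 0| := by
  have hinj : Function.Injective ⇑(Int.castRingHom ℂ) := fun a b h =>
    Int.cast_injective (α := ℂ) (by simpa using h)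
  set G := g.map (Int.castRingHom ℂ) with hG
  have hg0 : g ≠ 0 := fun h => by simp [h] at hg
  have hG0 : G ≠ 0 := by
    simpa [hG, Polynomial.map_eq_zero_iff hinj] using hg0
  have hGdeg : G.natDegree = g.natDegree :=
    Polynomial.natDegree_map_eq_of_injective hinj g
  have hsplit : G.Splits := IsAlgClosed.splits G
  have hfact := hsplit.eq_prod_roots
  have hcard : G.roots.card = G.natDegree := (Polynomial.splits_iff_card_roots).mp hsplit
  -- evaluate at 0
  have heval : G.eval 0 = G.leadingCoeff * (G.roots.map (fun r => -r)).prod := by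
    conv_lhs => rw [hfact]
    rw [Polynomial.eval_mul, Polynomial.eval_C, Polynomial.eval_multiset_prod,
      Multiset.map_map]
    congr 2
    apply Multiset.map_congr rfl
    intro r _
    simp
  have habs : ‖G.eval 0‖
      = ‖G.leadingCoeff‖ * ((G.roots.map (fun r => -r)).map (fun x => ‖x‖)).prod := by
    rw [heval, norm_mul]; congr 1; exact map_multiset_prod (normHom : ℂ →*₀ ℝ) _
  have hlead : 1 ≤ ‖G.leadingCoeff‖ := by
    have : G.leadingCoeff = (g.leadingCoeff : ℂ) := by
      rw [hG, Polynomial.leadingCoeff_map_of_injective hinj]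
      rfl
    rw [this, Complex.norm_intCast]
    have h1 : g.leadingCoeff ≠ 0 := Polynomial.leadingCoeff_ne_zero.mpr hg0
    have : (1 : ℤ) ≤ |g.leadingCoeff| := by
      rcases abs_pos.mpr h1 with h
      omega
    exact_mod_cast this
  -- roots nonempty and product of abs > 1
  have hmem : ∀ r ∈ G.roots, (G.map (RingHom.id ℂ)).eval r = 0 := by
    intro r hr
    have := Polynomial.isRoot_of_mem_roots hr
    simpa using this
  have hroot_abs : ∀ r ∈ G.roots, 1 < ‖r‖ := by
    intro r hr
    exact hroots r (by simpa using Polynomial.isRoot_of_mem_roots hr)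
  obtain ⟨r0, hr0⟩ : ∃ r, r ∈ G.roots := by
    have : 0 < G.roots.card := by omega
    exact Multiset.card_pos_iff_exists_mem.mp this
  obtain ⟨rest, hrest⟩ := Multiset.exists_cons_of_mem hr0
  have hprod : 1 < ((G.roots.map (fun r => -r)).map (fun x => ‖x‖)).prod := by
    rw [hrest]
    simp only [Multiset.map_cons, Multiset.prod_cons, norm_neg]
    have hrest_ge : 1 ≤ ((rest.map (fun r => -r)).map (fun x => ‖x‖)).prod := by
      apply Multiset.prod_induction (fun x : ℝ => 1 ≤ x)
      · intro a b ha hb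
        nlinarith
      · exact le_refl 1
      · intro x hx
        rw [Multiset.map_map] at hx
        obtain ⟨r, hr, rfl⟩ := Multiset.mem_map.mp hx
        have : r ∈ G.roots := by rw [hrest]; exact Multiset.mem_cons_of_mem hr
        have := hroot_abs r this
        simp only [Function.comp_apply, norm_neg]
        linarith
    have h0 := hroot_abs r0 hr0
    nlinarith
  have heval0 : G.eval 0 = (g.coeff 0 : ℂ) := by
    rw [hG, Polynomial.eval_map]
    simp [Polynomial.eval₂_at_zero]
  have : 1 < ‖G.eval 0‖ := by
    calc (1 : ℝ) = 1 * 1 := by ring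
      _ < ‖G.leadingCoeff‖ * ((G.roots.map (fun r => -r)).map (fun x => ‖x‖)).prod := by
          nlinarith
      _ = ‖G.eval 0‖ := habs.symm
  rw [heval0, Complex.norm_intCast] at this
  exact_mod_cast this

theorem panitopol_stefanescu_prime (f : Polynomial ℤ) (n : ℕ) (hn : f.natDegree = n)
    (hdeg : 1 ≤ n) (han : f.coeff n ≠ 0)
    (hbig : |f.coeff 0| > ∑ i ∈ Finset.Icc 1 n, |f.coeff i|)
    (hprime : (f.coeff 0).natAbs.Prime) :
    Irreducible f := by
  have hf0 : f ≠ 0 := fun h => han (by simp [h])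
  have hsum_an : |f.coeff n| ≤ ∑ i ∈ Finset.Icc 1 n, |f.coeff i| := by
    apply Finset.single_le_sum (f := fun i => |f.coeff i|)
    · intro i _; exact abs_nonneg _
    · simp [Finset.mem_Icc]; omega
  -- a constant factor must be a unit
  have hconst : ∀ c : ℤ, (C c) ∣ f → IsUnit c := by
    intro c ⟨b, hb⟩
    have hdvd0 : c ∣ f.coeff 0 := ⟨b.coeff 0, by rw [hb]; simp⟩
    have hdvdn : c ∣ f.coeff n := ⟨b.coeff n, by rw [hb]; simp [Polynomial.coeff_C_mul]⟩
    have hc0 : c ≠ 0 := by rintro rfl; simp at hdvdn; exact han hdvdn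
    have hdvd0' : c.natAbs ∣ (f.coeff 0).natAbs := Int.natAbs_dvd_natAbs.mpr hdvd0
    rcases (Nat.Prime.eq_one_or_self_of_dvd hprime _ hdvd0') with h1 | hp
    · exact Int.isUnit_iff_natAbs_eq.mpr h1
    · exfalso
      have h2 : c.natAbs ≤ (f.coeff n).natAbs :=
        Nat.le_of_dvd (Int.natAbs_pos.mpr han) (Int.natAbs_dvd_natAbs.mpr hdvdn)
      have h3 : |f.coeff n| < |f.coeff 0| := lt_of_le_of_lt hsum_an hbig
      rw [hp] at h2
      rw [Int.abs_eq_natAbs, Int.abs_eq_natAbs] at h3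
      omega
  rw [irreducible_iff]
  constructor
  · exact Polynomial.not_isUnit_of_natDegree_pos f (by omega)
  · intro a b hab
    have ha0 : a ≠ 0 := fun h => hf0 (by simp [hab, h])
    have hb0 : b ≠ 0 := fun h => hf0 (by simp [hab, h])
    by_cases hda : a.natDegree = 0
    · left
      have ha : a = C (a.coeff 0) := Polynomial.eq_C_of_natDegree_eq_zero hda
      rw [ha]
      exact (Polynomial.isUnit_C).mpr (hconst _ (by rw [← ha]; exact ⟨b, hab⟩))
    by_cases hdb : b.natDegree = 0
    · right
      have hb : b = C (b.coeff 0) := Polynomial.eq_C_of_natDegree_eq_zero hdb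
      rw [hb]
      exact (Polynomial.isUnit_C).mpr (hconst _ (by rw [← hb]; exact ⟨a, by rw [hab, mul_comm]⟩))
    exfalso
    -- both factors nonconstant: use the root bound
    have hrootsf : ∀ z : ℂ, (f.map (Int.castRingHom ℂ)).eval z = 0 → 1 < ‖z‖ :=
      fun z hz => ps_root_abs hn hbig hz
    have key : ∀ g h : Polynomial ℤ, f = g * h → 1 ≤ g.natDegree → 1 < |g.coeff 0| := by
      intro g h hgh hgdeg
      apply ps_const_coeff hgdeg
      intro z hz
      apply hrootsf
      rw [hgh, Polynomial.map_mul, Polynomial.eval_mul, hz, zero_mul]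
    have h1 : 1 < |a.coeff 0| := key a b hab (by omega)
    have h2 : 1 < |b.coeff 0| := key b a (by rw [hab, mul_comm]) (by omega)
    have hmul : f.coeff 0 = a.coeff 0 * b.coeff 0 := by
      rw [hab, Polynomial.mul_coeff_zero]
    have hnat : (f.coeff 0).natAbs = (a.coeff 0).natAbs * (b.coeff 0).natAbs := by
      rw [hmul, Int.natAbs_mul]
    have h1' : 2 ≤ (a.coeff 0).natAbs := by rw [Int.abs_eq_natAbs] at h1; omega
    have h2' : 2 ≤ (b.coeff 0).natAbs := by rw [Int.abs_eq_natAbs] at h2; omega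
    rcases (Nat.Prime.eq_one_or_self_of_dvd hprime _ ⟨_, hnat⟩) with h | h
    · omega
    · rw [h] at hnat
      have hp0 : 0 < (f.coeff 0).natAbs := hprime.pos
      nlinarith
end

section
/- Let f = a_0 + a_1 x + ... + a_n x^n ∈ ℤ[x] with a_n ≠ 0, n ≥ 1, and suppose there exists an integer m with m > 1 + max over all complex zeros θ of f of Re(θ), such that f(m) is prime. Then f is irreducible in ℤ[x]. -/
open Polynomial

lemma mult_prod_gt_one (t : Multiset ℝ) (ht : t ≠ 0) (h : ∀ x ∈ t, 1 < x) :
    1 < t.prod := by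
  induction t using Multiset.induction_on with
  | empty => simp at ht
  | cons a s ih =>
    rw [Multiset.prod_cons]
    have ha := h a (Multiset.mem_cons_self a s)
    have hs1 : (1:ℝ) ≤ s.prod := by
      rcases eq_or_ne s 0 with rfl | hs
      · simp
      · exact le_of_lt (ih hs fun x hx => h x (Multiset.mem_cons_of_mem hx))
    nlinarith

lemma aux_gt_one (g : Polynomial ℤ) (m : ℤ)
    (hd : 1 ≤ g.natDegree)
    (hm : ∀ θ : ℂ, Polynomial.aeval θ g = 0 → (m : ℝ) > 1 + θ.re) :
    1 < |g.eval m| := by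
  have hg0 : g ≠ 0 := fun h => by simp [h] at hd
  set G : Polynomial ℂ := g.map (algebraMap ℤ ℂ) with hG
  have hinj : Function.Injective (algebraMap ℤ ℂ) := fun a b hab => by
    have : (a : ℂ) = (b : ℂ) := hab
    exact_mod_cast this
  have hG0 : G ≠ 0 := by
    rw [hG]; exact (Polynomial.map_ne_zero_iff hinj).mpr hg0
  have hsplit : Splits G := IsAlgClosed.splits G
  have hcard : G.roots.card = g.natDegree := by
    rw [Polynomial.splits_iff_card_roots.mp hsplit, hG, Polynomial.natDegree_map_eq_of_injective hinj]
  have heq := hsplit.eq_prod_roots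
  -- evaluate at m
  have hGm : G.eval (m : ℂ) = ((g.eval m : ℤ) : ℂ) := by
    rw [hG, Polynomial.eval_intCast_map]
    simp
  have habs : ((|g.eval m| : ℤ) : ℝ) =
      ‖G.leadingCoeff‖ * (G.roots.map (fun θ => ‖(m : ℂ) - θ‖)).prod := by
    have : ‖G.eval (m : ℂ)‖ = ((|g.eval m| : ℤ) : ℝ) := by
      rw [hGm, show (((g.eval m : ℤ)) : ℂ) = (((g.eval m : ℤ) : ℝ) : ℂ) by push_cast; ring,
        Complex.norm_real, Real.norm_eq_abs]
      exact Int.cast_abs.symm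
    rw [← this]
    conv_lhs => rw [heq]
    rw [Polynomial.eval_mul, Polynomial.eval_C, Polynomial.eval_multiset_prod, norm_mul]
    congr 1
    rw [show ∀ s : Multiset ℂ, ‖s.prod‖ = (s.map (‖·‖)).prod from fun s => map_multiset_prod normHom s, Multiset.map_map, Multiset.map_map]
    apply congrArg
    apply Multiset.map_congr rfl
    intro θ _
    simp
  have hlead : 1 ≤ ‖G.leadingCoeff‖ := by
    have : G.leadingCoeff = (g.leadingCoeff : ℂ) := by
      rw [hG, Polynomial.leadingCoeff_map_of_leadingCoeff_ne_zero]
      · rfl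
      · simpa using Polynomial.leadingCoeff_ne_zero.mpr hg0
    rw [this]
    rw [show ((g.leadingCoeff : ℂ)) = ((g.leadingCoeff : ℝ) : ℂ) by push_cast; ring,
      Complex.norm_real, Real.norm_eq_abs]
    have := Int.one_le_abs (Polynomial.leadingCoeff_ne_zero.mpr hg0)
    exact_mod_cast this
  have hroots : ∀ x ∈ G.roots.map (fun θ => ‖(m : ℂ) - θ‖), 1 < x := by
    intro x hx
    obtain ⟨θ, hθ, rfl⟩ := Multiset.mem_map.mp hx
    have hroot : Polynomial.aeval θ g = 0 := by
      have h0 : G.IsRoot θ := (Polynomial.mem_roots hG0).mp hθ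
      rw [Polynomial.aeval_def, ← Polynomial.eval_map]
      exact h0
    have h1 : (m : ℝ) > 1 + θ.re := hm θ hroot
    have h2 : |((m : ℂ) - θ).re| ≤ ‖(m : ℂ) - θ‖ := Complex.abs_re_le_norm _
    have h3 : ((m : ℂ) - θ).re = (m : ℝ) - θ.re := by simp
    calc (1 : ℝ) < (m : ℝ) - θ.re := by linarith
      _ ≤ |((m : ℂ) - θ).re| := by rw [h3]; exact le_abs_self _
      _ ≤ _ := h2
  have hne : G.roots.map (fun θ => ‖(m : ℂ) - θ‖) ≠ 0 := by
    intro h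
    have := congrArg Multiset.card h
    simp [hcard] at this
    omega
  have hprod := mult_prod_gt_one _ hne hroots
  have : (1 : ℝ) < ((|g.eval m| : ℤ) : ℝ) := by
    rw [habs]
    nlinarith [hprod, hlead]
  exact_mod_cast this

theorem panitopol_stefanescu_re (f : Polynomial ℤ) (n : ℕ) (hn : f.natDegree = n)
    (hdeg : 1 ≤ n) (han : f.coeff n ≠ 0)
    (m : ℤ)
    (hm : ∀ θ : ℂ, Polynomial.aeval θ f = 0 → (m : ℝ) > 1 + θ.re)
    (hpos : 0 < f.eval m) (hprime : Prime (f.eval m)) :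
    Irreducible f := by
  have hf0 : f ≠ 0 := by
    intro h; rw [h] at hprime; simp at hprime
  have hfd : 1 ≤ f.natDegree := hn ▸ hdeg
  -- key: any divisor g with |g.eval m| ≤ 1 is a unit
  have key : ∀ g : Polynomial ℤ, g ∣ f → |g.eval m| ≤ 1 → IsUnit g := by
    intro g hgf hle
    have hg0 : g ≠ 0 := by
      rintro rfl
      obtain ⟨k, hk⟩ := hgf
      rw [hk] at hprime
      simp at hprime
    rcases Nat.eq_zero_or_pos g.natDegree with h0 | h1
    · have hc : g = Polynomial.C (g.coeff 0) := Polynomial.eq_C_of_natDegree_eq_zero h0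
      have hcoeff : g.coeff 0 ≠ 0 := by
        intro hh; rw [hh, Polynomial.C_0] at hc; exact hg0 hc
      have : |g.coeff 0| ≤ 1 := by
        have : g.eval m = g.coeff 0 := by rw [hc]; simp
        rwa [this] at hle
      have habs1 : |g.coeff 0| = 1 := le_antisymm this (Int.one_le_abs hcoeff)
      have hu : IsUnit (g.coeff 0) := by
        rw [Int.isUnit_iff_natAbs_eq]
        rw [Int.abs_eq_natAbs] at habs1
        exact_mod_cast habs1
      rw [hc]
      exact hu.map Polynomial.C
    · exfalso
      have hmg : ∀ θ : ℂ, Polynomial.aeval θ g = 0 → (m : ℝ) > 1 + θ.re := by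
        intro θ hθ
        apply hm
        obtain ⟨k, hk⟩ := hgf
        rw [hk, map_mul, hθ, zero_mul]
      have := aux_gt_one g m h1 hmg
      omega
  constructor
  · intro hu
    have := Polynomial.natDegree_eq_zero_of_isUnit hu
    omega
  · intro a b hab
    have hma : f.eval m = a.eval m * b.eval m := by rw [hab, Polynomial.eval_mul]
    have := hprime.irreducible.isUnit_or_isUnit (hma ▸ rfl : f.eval m = a.eval m * b.eval m)
    rcases this with h | h
    · left
      apply key a ⟨b, hab⟩
      rw [Int.isUnit_iff] at h
      rcases h with h | h <;> simp [h]
    · right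
      apply key b ⟨a, by rw [hab, mul_comm]⟩
      rw [Int.isUnit_iff] at h
      rcases h with h | h <;> simp [h]
end

section
/- Let f, g ∈ ℤ[x] with f(x) = g(x)^n + p·h(x) where g is monic, p is prime, n ≥ 1, f is monic of degree n·deg(g), and suppose f = f_1 · f_2 with f_1, f_2 ∈ ℤ[x] monic nonconstant. Then there exist polynomials g_1, g_2 ∈ ℤ[x] and an integer r with 0 < r < n such that f_1 = g^r + p·g_1 and f_2 = g^{n−r} + p·g_2, provided the reduction of g modulo p is irreducible over 𝔽_p. -/
open Polynomial

theorem schonemann_key_step (f g h f₁ f₂ : Polynomial ℤ)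
    (p : ℕ) (hp : p.Prime) (n : ℕ) (hn : 1 ≤ n)
    (hg : g.Monic) (hf : f.Monic) (hfdeg : f.natDegree = n * g.natDegree)
    (hfgh : f = g ^ n + C (p : ℤ) * h)
    (hirr : Irreducible (g.map (Int.castRingHom (ZMod p))))
    (hf₁ : f₁.Monic) (hf₂ : f₂.Monic)
    (hd₁ : 0 < f₁.natDegree) (hd₂ : 0 < f₂.natDegree)
    (hff : f = f₁ * f₂) :
    ∃ (r : ℕ) (g₁ g₂ : Polynomial ℤ), 0 < r ∧ r < n ∧
      f₁ = g ^ r + C (p : ℤ) * g₁ ∧ f₂ = g ^ (n - r) + C (p : ℤ) * g₂ := by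
  haveI : Fact p.Prime := ⟨hp⟩
  set φ := Int.castRingHom (ZMod p)
  set gbar := g.map φ with hgbar
  have hCp : (C (p : ℤ)).map φ = 0 := by
    simp [φ, map_C]
  have hmapf : f.map φ = gbar ^ n := by
    rw [hfgh]
    simp [Polynomial.map_add, Polynomial.map_mul, Polynomial.map_pow, hCp]
    rfl
  have hprod : (f₁.map φ) * (f₂.map φ) = gbar ^ n := by
    rw [← Polynomial.map_mul, ← hff, hmapf]
  have hgmonic : gbar.Monic := hg.map φ
  have hprime : Prime gbar := hirr.prime
  have hdvd : (f₁.map φ) ∣ gbar ^ n := ⟨f₂.map φ, hprod.symm⟩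
  obtain ⟨r, hrn, hassoc⟩ := (dvd_prime_pow hprime n).mp hdvd
  have hf₁bar : f₁.map φ = gbar ^ r :=
    Polynomial.eq_of_monic_of_associated (hf₁.map φ) (hgmonic.pow r) hassoc
  -- cancel to get f₂
  have hgne : gbar ≠ 0 := hprime.ne_zero
  have hf₂bar : f₂.map φ = gbar ^ (n - r) := by
    have : gbar ^ r * (f₂.map φ) = gbar ^ r * gbar ^ (n - r) := by
      rw [← pow_add, Nat.add_sub_cancel' hrn, ← hprod, hf₁bar]
    exact mul_left_cancel₀ (pow_ne_zero r hgne) this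
  have key : ∀ (q : Polynomial ℤ) (m : ℕ), q.map φ = gbar ^ m →
      ∃ q₁, q = g ^ m + C (p : ℤ) * q₁ := by
    intro q m hq
    have h0 : (q - g ^ m).map φ = 0 := by
      rw [Polynomial.map_sub, Polynomial.map_pow, hq]; ring
    have hdv : C (p : ℤ) ∣ q - g ^ m := by
      rw [Polynomial.C_dvd_iff_dvd_coeff]
      intro i
      have := congrArg (fun s => Polynomial.coeff s i) h0
      simp only [Polynomial.coeff_map, Polynomial.coeff_zero] at this
      have : ((q - g ^ m).coeff i : ZMod p) = 0 := this
      exact_mod_cast (ZMod.intCast_zmod_eq_zero_iff_dvd _ p).mp this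
    obtain ⟨q₁, hq₁⟩ := hdv
    exact ⟨q₁, by linear_combination hq₁⟩
  obtain ⟨g₁, hg₁⟩ := key f₁ r hf₁bar
  obtain ⟨g₂, hg₂⟩ := key f₂ (n - r) hf₂bar
  refine ⟨r, g₁, g₂, ?_, ?_, hg₁, hg₂⟩
  · rcases Nat.eq_zero_or_pos r with h0 | h0
    · subst h0
      have : f₁.natDegree = 0 := by
        have := hf₁.natDegree_map φ
        rw [hf₁bar] at this
        simpa using this.symm
      omega
    · exact h0
  · rcases Nat.lt_or_ge r n with h0 | h0
    · exact h0
    · have hrn' : r = n := le_antisymm hrn h0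
      have : f₂.natDegree = 0 := by
        have := hf₂.natDegree_map φ
        rw [hf₂bar] at this
        simp [hrn'] at this
        exact this.symm
      omega
end
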